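/- arXiv:2008.01256 — 7 statements merged into one kernel-verified Lean document; each statement's English description precedes it below -/
import Mathlib

section
/- Let h, q : ℝ^m → ℝ be quadratic polynomials and suppose there exists u0 ∈ ℝ^m with q(u0) > 0. Then the following are equivalent: (i) for all x, q(x) ≥ 0 implies h(x) ≥ 0; (ii) there exists λ ≥ 0 such that h(x) ≥ λ·q(x) for all x ∈ ℝ^m. -/
/-!
Homogenize: a polynomial `p` of degree at most two is the restriction to `t = 1` of the quadratic
form `(x, t) ↦ t² p(x / t)`, and the hypothesis passes to the forms (at `t = 0` along rays from
the Slater point). For quadratic forms `F`, `G` with `G x > 0 > G y`, the form `G` vanishes on the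
line `x + t y` at two parameters of opposite signs, where `F ≥ 0`; since `G y • F - F y • G` is
affine along that line, this gives `F x / G x ≥ F y / G y`. Hence `λ = inf {F z / G z | G z > 0}`
works.
-/

open MvPolynomial Filter Topology

namespace QuadraticMap

variable {R M : Type*} [CommRing R] [AddCommGroup M] [Module R M]

theorem map_add_smul (Q : QuadraticMap R M R) (x y : M) (s : R) :
    Q (x + s • y) = Q x + polar Q x y * s + Q y * s ^ 2 := by
  rw [QuadraticMap.map_add Q, polar_smul_right, QuadraticMap.map_smul, smul_eq_mul, smul_eq_mul]
  ring

end QuadraticMap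

theorem exists_quadratic_eq_zero_of_mul_neg {a b c : ℝ} (hac : a * c < 0) :
    ∃ t₁ t₂ : ℝ, t₁ * t₂ < 0 ∧
      a * (t₁ * t₁) + b * t₁ + c = 0 ∧ a * (t₂ * t₂) + b * t₂ + c = 0 := by
  have ha : a ≠ 0 := by rintro rfl; simp at hac
  obtain ⟨s, hs⟩ : ∃ s, discrim a b c = s * s :=
    ⟨_, (Real.mul_self_sqrt (by rw [discrim]; nlinarith [sq_nonneg b])).symm⟩
  have hroot := quadratic_eq_zero_iff ha hs
  refine ⟨_, _, ?_, (hroot _).2 (Or.inl rfl), (hroot _).2 (Or.inr rfl)⟩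
  rw [div_mul_div_comm, div_neg_iff]
  right
  refine ⟨?_, mul_self_pos.2 (mul_ne_zero two_ne_zero ha)⟩
  rw [discrim] at hs
  linear_combination hs + 4 * hac

theorem nonneg_of_forall_nonneg_quadratic {a b c : ℝ}
    (h : ∀ s, 0 ≤ s → 0 ≤ a + b * s + c * s ^ 2) : 0 ≤ c := by
  have hlim : Tendsto (fun s : ℝ => a * s⁻¹ ^ 2 + b * s⁻¹ + c) atTop (𝓝 c) := by
    have := tendsto_inv_atTop_zero (𝕜 := ℝ)
    simpa using (((this.pow 2).const_mul a).add (this.const_mul b)).add_const c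
  refine ge_of_tendsto hlim ((eventually_gt_atTop 0).mono fun s hs => ?_)
  calc 0 ≤ (a + b * s + c * s ^ 2) / s ^ 2 := by have := h s hs.le; positivity
    _ = a * s⁻¹ ^ 2 + b * s⁻¹ + c := by field_simp

theorem Finsupp.eq_zero_or_single_or_add_single_of_sum_le_two {σ : Type*} (d : σ →₀ ℕ)
    (hd : (d.sum fun _ e => e) ≤ 2) :
    d = 0 ∨ (∃ i, d = single i 1) ∨ ∃ i j, d = single i 1 + single j 1 := by
  classical
  have hcard : Multiset.card (toMultiset d) ≤ 2 := by rwa [card_toMultiset]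
  rw [← toMultiset_toFinsupp d]
  generalize toMultiset d = s at hcard ⊢
  interval_cases hs : Multiset.card s
  · simp [Multiset.card_eq_zero.mp hs]
  · obtain ⟨i, rfl⟩ := Multiset.card_eq_one.mp hs
    exact Or.inr (Or.inl ⟨i, by simp⟩)
  · obtain ⟨i, j, rfl⟩ := Multiset.card_eq_two.mp hs
    right; right
    refine ⟨i, j, ?_⟩
    rw [Multiset.insert_eq_cons, ← Multiset.singleton_add, Multiset.toFinsupp_add]
    simp

namespace QuadraticMap

variable {E : Type*} [AddCommGroup E] [Module ℝ E] {F G : QuadraticMap ℝ E ℝ}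

theorem mul_apply_le_mul_apply (hFG : ∀ z, G z = 0 → 0 ≤ F z) {x y : E}
    (hx : 0 < G x) (hy : G y < 0) : F x * G y ≤ F y * G x := by
  have hline : ∀ t : ℝ, G y * (t * t) + polar G x y * t + G x = 0 →
      F x * G y - F y * G x + (polar F x y * G y - F y * polar G x y) * t ≤ 0 := by
    intro t ht
    have hG : G (x + t • y) = 0 := by rw [map_add_smul]; linear_combination ht
    have hF := mul_nonpos_of_nonneg_of_nonpos (hFG _ hG) hy.le
    rw [map_add_smul] at hF
    linear_combination hF - F y * ht
  obtain ⟨t₁, t₂, ht, h₁, h₂⟩ :=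
    exists_quadratic_eq_zero_of_mul_neg (mul_neg_of_neg_of_pos hy hx)
  have := hline t₁ h₁
  have := hline t₂ h₂
  rcases lt_or_gt_of_ne (left_ne_zero_of_mul ht.ne) with ht₁ | ht₁ <;> nlinarith

theorem s_lemma_homogeneous (hslater : ∃ z₀, 0 < G z₀) (himp : ∀ z, 0 ≤ G z → 0 ≤ F z) :
    ∃ lam : ℝ, 0 ≤ lam ∧ ∀ z, lam * G z ≤ F z := by
  obtain ⟨z₀, hz₀⟩ := hslater
  set ratios := (fun z => F z / G z) '' {z | 0 < G z}
  have hne : ratios.Nonempty := ⟨_, z₀, hz₀, rfl⟩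
  have hbdd : ∀ r ∈ ratios, 0 ≤ r := by
    rintro _ ⟨z, hz, rfl⟩
    exact div_nonneg (himp z hz.le) hz.le
  refine ⟨sInf ratios, Real.sInf_nonneg hbdd, fun z => ?_⟩
  rcases lt_trichotomy (G z) 0 with hz | hz | hz
  · refine (div_le_iff_of_neg hz).1 (le_csInf hne ?_)
    rintro _ ⟨x, hx, rfl⟩
    rw [div_le_iff_of_neg hz, div_mul_eq_mul_div, div_le_iff₀ hx]
    exact mul_apply_le_mul_apply (fun z hz => himp z hz.ge) hx hz
  · simpa [hz] using himp z hz.ge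
  · exact (le_div_iff₀ hz).1 (csInf_le ⟨0, hbdd⟩ ⟨z, hz, rfl⟩)

theorem nonneg_of_nonneg_on_ray {z₀ w : E} (hz₀ : 0 < G z₀) (hw : 0 ≤ G w)
    (himp : ∀ s : ℝ, 0 ≤ G (z₀ + s • w) → 0 ≤ F (z₀ + s • w)) : 0 ≤ F w := by
  wlog hp : 0 ≤ polar G z₀ w generalizing w
  · rw [← QuadraticMap.map_neg]
    refine this (by rwa [QuadraticMap.map_neg]) (fun s => ?_) ?_
    · simpa [smul_neg, ← neg_smul] using himp (-s)
    · rw [polar_neg_right]; linarith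
  refine nonneg_of_forall_nonneg_quadratic (a := F z₀) (b := polar F z₀ w) fun s hs => ?_
  rw [← map_add_smul]
  refine himp s ?_
  rw [map_add_smul]
  nlinarith [mul_nonneg hs hp, mul_nonneg (sq_nonneg s) hw]

theorem nonneg_of_nonneg_of_slice {V : Type*} [AddCommGroup V] [Module ℝ V]
    {F G : QuadraticMap ℝ (V × ℝ) ℝ} (hslater : ∃ u, 0 < G (u, 1))
    (himp : ∀ x, 0 ≤ G (x, 1) → 0 ≤ F (x, 1)) (z : V × ℝ) (hz : 0 ≤ G z) : 0 ≤ F z := by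
  obtain ⟨x, t⟩ := z
  by_cases ht : t = 0
  · subst ht
    obtain ⟨u, hu⟩ := hslater
    refine nonneg_of_nonneg_on_ray hu hz fun s => ?_
    simpa using himp (u + s • x)
  · have hxt : (x, t) = t • (t⁻¹ • x, (1 : ℝ)) := by simp [smul_smul, ht]
    rw [hxt, QuadraticMap.map_smul, smul_eq_mul] at hz ⊢
    have ht2 : 0 < t * t := mul_self_pos.2 ht
    exact mul_nonneg ht2.le (himp _ (nonneg_of_mul_nonneg_right hz ht2))

end QuadraticMap

section Homogenization

variable {R σ : Type*} [CommRing R]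

theorem exists_quadraticMap_homogenization_monomial (d : σ →₀ ℕ) (c : R)
    (hd : (d.sum fun _ e => e) ≤ 2) :
    ∃ Q : QuadraticMap R ((σ → R) × R) R, ∀ x, Q (x, 1) = eval x (monomial d c) := by
  classical
  let coord (i : σ) : (σ → R) × R →ₗ[R] R := LinearMap.proj i ∘ₗ LinearMap.fst R _ _
  let last : (σ → R) × R →ₗ[R] R := LinearMap.snd R _ _
  rcases Finsupp.eq_zero_or_single_or_add_single_of_sum_le_two d hd with
    rfl | ⟨i, rfl⟩ | ⟨i, j, rfl⟩
  · exact ⟨c • QuadraticMap.linMulLin last last, fun x => by simp [last]⟩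
  · exact ⟨c • QuadraticMap.linMulLin (coord i) last,
      fun x => by simp [coord, last, eval_monomial]⟩
  · refine ⟨c • QuadraticMap.linMulLin (coord i) (coord j), fun x => ?_⟩
    rw [eval_monomial, Finsupp.prod_add_index (by simp) fun _ _ => pow_add _]
    simp [coord]

theorem exists_quadraticMap_homogenization (p : MvPolynomial σ R) (hp : p.totalDegree ≤ 2) :
    ∃ Q : QuadraticMap R ((σ → R) × R) R, ∀ x, Q (x, 1) = eval x p := by
  rw [← support_sum_monomial_coeff p]
  refine Finset.sum_induction _
    (fun p => ∃ Q : QuadraticMap R ((σ → R) × R) R, ∀ x, Q (x, 1) = eval x p)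
    ?_ ⟨0, fun x => by simp⟩ fun d hd =>
      exists_quadraticMap_homogenization_monomial d _ ((le_totalDegree hd).trans hp)
  rintro p q ⟨P, hP⟩ ⟨Q, hQ⟩
  exact ⟨P + Q, fun x => by simp [hP, hQ]⟩

end Homogenization

/-- The S-lemma for quadratic polynomials in `m` variables. -/
theorem s_lemma (m : ℕ) (h q : MvPolynomial (Fin m) ℝ)
    (hh : h.totalDegree ≤ 2) (hq : q.totalDegree ≤ 2)
    (hslater : ∃ u0 : Fin m → ℝ, 0 < eval u0 q) :
    (∀ x : Fin m → ℝ, 0 ≤ eval x q → 0 ≤ eval x h) ↔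
      ∃ lam : ℝ, 0 ≤ lam ∧ ∀ x : Fin m → ℝ, lam * eval x q ≤ eval x h := by
  refine ⟨fun himp => ?_, fun ⟨lam, hlam, hle⟩ x hx => (mul_nonneg hlam hx).trans (hle x)⟩
  obtain ⟨F, hF⟩ := exists_quadraticMap_homogenization h hh
  obtain ⟨G, hG⟩ := exists_quadraticMap_homogenization q hq
  obtain ⟨u, hu⟩ := hslater
  have hGu : 0 < G (u, 1) := by rwa [hG]
  obtain ⟨lam, hlam, hle⟩ := QuadraticMap.s_lemma_homogeneous ⟨_, hGu⟩
    (QuadraticMap.nonneg_of_nonneg_of_slice (F := F) ⟨u, hGu⟩ fun x => by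
      simpa only [hF, hG] using himp x)
  exact ⟨lam, hlam, fun x => by simpa only [hF, hG] using hle (x, 1)⟩
end

section
/- Every nonnegative real polynomial of total degree 2 in m variables is a sum of squares of real polynomials. -/
open MvPolynomial Matrix

/-!
A polynomial `h` of degree at most two is a quadratic form in the homogeneous coordinates
`(1, x)`: `h(x) = (1, x)ᵀ M (1, x)` for a symmetric matrix `M`. For `v = (t, y)` with `t ≠ 0`,
`vᵀ M v = t² h(y / t)`, so if `h ≥ 0` the form `vᵀ M v` is nonnegative on a dense set, hence
everywhere, and `M` is positive semidefinite. Writing `M = Bᵀ B` turns `h = (1, X)ᵀ Bᵀ B (1, X)`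
into the sum of the squares of the entries of `B (1, X)`.
-/

variable {σ R : Type*}

def withOne [One R] (x : σ → R) : Option σ → R := fun o => o.elim 1 x

@[simp] lemma withOne_none [One R] (x : σ → R) : withOne x none = 1 := rfl

@[simp] lemma withOne_some [One R] (x : σ → R) (i : σ) : withOne x (some i) = x i := rfl

namespace MvPolynomial

section CommSemiring

variable [CommSemiring R]

@[simp] lemma eval_withOne (x : σ → R) (i : Option σ) : eval x (withOne X i) = withOne x i := by
  cases i <;> simp

lemma exists_monomial_eq_withOne_mul {d : σ →₀ ℕ}
    (hd : Multiset.card (Finsupp.toMultiset d) ≤ 2) :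
    ∃ i j : Option σ, monomial d (1 : R) = withOne X i * withOne X j := by
  classical
  rw [← Finsupp.toMultiset_toFinsupp d]
  generalize Finsupp.toMultiset d = s at hd
  interval_cases hs : Multiset.card s
  · obtain rfl := Multiset.card_eq_zero.mp hs
    exact ⟨none, none, by simp⟩
  · obtain ⟨a, rfl⟩ := Multiset.card_eq_one.mp hs
    exact ⟨some a, none, by simp [X]⟩
  · obtain ⟨a, b, rfl⟩ := Multiset.card_eq_two.mp hs
    refine ⟨some a, some b, ?_⟩
    rw [Multiset.insert_eq_cons, ← Multiset.singleton_add, Multiset.toFinsupp_add]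
    simp [X, monomial_mul]

variable [Fintype σ]

noncomputable def quadPoly : Matrix (Option σ) (Option σ) R →ₗ[R] MvPolynomial σ R where
  toFun M := ∑ i, ∑ j, M i j • (withOne X i * withOne X j)
  map_add' M N := by simp [add_smul, Finset.sum_add_distrib]
  map_smul' c M := by simp [Finset.smul_sum, mul_smul]

lemma quadPoly_apply (M : Matrix (Option σ) (Option σ) R) :
    quadPoly M = ∑ i, ∑ j, M i j • (withOne X i * withOne X j) := rfl

lemma eval_quadPoly (x : σ → R) (M : Matrix (Option σ) (Option σ) R) :
    eval x (quadPoly M) = withOne x ⬝ᵥ M *ᵥ withOne x := by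
  simp only [quadPoly_apply, map_sum, smul_eval, eval_mul, eval_withOne, dotProduct, mulVec,
    Finset.mul_sum]
  exact Finset.sum_congr rfl fun i _ => Finset.sum_congr rfl fun j _ => by ring

lemma quadPoly_transpose (M : Matrix (Option σ) (Option σ) R) : quadPoly Mᵀ = quadPoly M := by
  simp only [quadPoly_apply, transpose_apply]
  rw [Finset.sum_comm]
  simp only [mul_comm]

lemma exists_quadPoly_eq {p : MvPolynomial σ R} (hp : p.totalDegree ≤ 2) :
    ∃ M, quadPoly M = p := by
  have hspan : p ∈ Submodule.span R
      (Set.range fun ij : Option σ × Option σ => withOne X ij.1 * withOne X ij.2) := by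
    rw [p.as_sum]
    refine Submodule.sum_mem _ fun d hd => ?_
    obtain ⟨i, j, hij⟩ := exists_monomial_eq_withOne_mul (R := R)
      ((Finsupp.card_toMultiset d).trans_le ((le_totalDegree hd).trans hp))
    rw [← mul_one (coeff d p), ← smul_eq_mul, ← smul_monomial, hij]
    exact Submodule.smul_mem _ _ (Submodule.subset_span ⟨(i, j), rfl⟩)
  obtain ⟨c, hc⟩ := (Submodule.mem_span_range_iff_exists_fun R).mp hspan
  exact ⟨of fun i j => c (i, j), by simp [quadPoly_apply, ← hc, Fintype.sum_prod_type]⟩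

lemma isSumSq_quadPoly_transpose_mul_self {ι : Type*} [Fintype ι] (B : Matrix ι (Option σ) R) :
    IsSumSq (quadPoly (Bᵀ * B)) := by
  have hsum : quadPoly (Bᵀ * B) =
      ∑ k, (∑ i, B k i • withOne X i) * (∑ i, B k i • withOne X i) := by
    simp only [quadPoly_apply, mul_apply, transpose_apply, Finset.sum_smul, Finset.sum_mul_sum,
      smul_mul_smul_comm]
    exact Finset.sum_comm_cycle
  rw [hsum]
  exact IsSumSq.sum_mul_self _ _

end CommSemiring

lemma exists_isSymm_quadPoly_eq [CommRing R] [Invertible (2 : R)] [Fintype σ]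
    {p : MvPolynomial σ R} (hp : p.totalDegree ≤ 2) : ∃ M, M.IsSymm ∧ quadPoly M = p := by
  obtain ⟨M, rfl⟩ := exists_quadPoly_eq hp
  refine ⟨(⅟2 : R) • (M + Mᵀ), (isSymm_add_transpose_self M).smul _, ?_⟩
  rw [map_smul, map_add, quadPoly_transpose, ← two_smul R, smul_smul, invOf_mul_self, one_smul]

end MvPolynomial

lemma Matrix.posSemidef_of_nonneg_withOne [Fintype σ] {M : Matrix (Option σ) (Option σ) ℝ}
    (hM : M.IsSymm) (h : ∀ x, 0 ≤ withOne x ⬝ᵥ M *ᵥ withOne x) : M.PosSemidef := by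
  refine .of_dotProduct_mulVec_nonneg (by simpa using hM) fun v => ?_
  rw [star_trivial]
  have hdense : Dense {v : Option σ → ℝ | v none ≠ 0} :=
    (dense_compl_singleton (0 : ℝ)).preimage (isOpenMap_eval none)
  have hsub : {v : Option σ → ℝ | v none ≠ 0} ⊆ {v | 0 ≤ v ⬝ᵥ M *ᵥ v} := fun v hv => by
    have hv' : v = v none • withOne (fun i => v (some i) / v none) := by
      ext (_ | i)
      · simp
      · simp [mul_div_cancel₀ _ hv]
    rw [Set.mem_ofPred_eq, hv', mulVec_smul, dotProduct_smul, smul_dotProduct,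
      smul_eq_mul, smul_eq_mul, ← mul_assoc]
    exact mul_nonneg (mul_self_nonneg _) (h _)
  have hclosed : IsClosed {v : Option σ → ℝ | 0 ≤ v ⬝ᵥ M *ᵥ v} :=
    isClosed_le continuous_const (by fun_prop)
  have huniv := (hdense.mono hsub).closure_eq
  rw [hclosed.closure_eq] at huniv
  exact Set.eq_univ_iff_forall.mp huniv v

open scoped MatrixOrder in
lemma Matrix.PosSemidef.exists_eq_transpose_mul_self {n : Type*} [Fintype n] [DecidableEq n]
    {M : Matrix n n ℝ} (hM : M.PosSemidef) : ∃ B : Matrix n n ℝ, M = Bᵀ * B := by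
  obtain ⟨B, hB⟩ := CStarAlgebra.nonneg_iff_eq_star_mul_self.mp hM.nonneg
  exact ⟨B, by rwa [star_eq_conjTranspose, conjTranspose_eq_transpose_of_trivial] at hB⟩

/-- Hilbert: every nonnegative polynomial of total degree 2 in `m` variables is a
sum of squares of polynomials. -/
theorem quadratic_nonneg_isSumSq (m : ℕ) (h : MvPolynomial (Fin m) ℝ)
    (hdeg : h.totalDegree = 2) (hnn : ∀ x : Fin m → ℝ, 0 ≤ eval x h) :
    IsSumSq h := by
  obtain ⟨M, hMsymm, rfl⟩ := exists_isSymm_quadPoly_eq hdeg.le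
  have hM : M.PosSemidef :=
    posSemidef_of_nonneg_withOne hMsymm fun x => eval_quadPoly x M ▸ hnn x
  obtain ⟨B, rfl⟩ := hM.exists_eq_transpose_mul_self
  exact isSumSq_quadPoly_transpose_mul_self B
end

section
/- Let h : ℝ^m → ℝ be a convex polynomial. If the Hessian ∇²h(u') is positive definite at some point u' ∈ ℝ^m, then h is coercive (all sublevel sets {x : h(x) ≤ α} are compact) and strictly convex on ℝ^m. -/
/-!
Restricted to a line `t ↦ x + t • v`, the polynomial `h` becomes a one-variable polynomial whose
second derivative at `0` is `vᵀ ∇²h(x) v`. At `u'` this is positive, so each restriction there is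
a convex polynomial of degree at least two; its leading coefficient is nonnegative (it lies above a
secant), so it tends to `+∞`. Divergence along every ray from `u'`, made uniform by compactness of
the unit sphere, bounds every sublevel set by convexity. If the restriction to some other line were
affine, convexity would bound `h` by an affine function on the parallel line through `u'`, which is
impossible; so every restriction has degree at least two, hence a strictly increasing derivative,
hence is strictly convex.
-/

open MvPolynomial

open Set Filter Metric Matrix

namespace Polynomial

theorem derivative_derivative_eq_zero_iff {R : Type*} [Semiring R] [IsAddTorsionFree R]
    {p : R[X]} : derivative (derivative p) = 0 ↔ p.natDegree ≤ 1 := by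
  rw [derivative_eq_zero, natDegree_derivative]
  omega

variable {p : ℝ[X]}

theorem leadingCoeff_nonneg_of_convexOn (hconv : ConvexOn ℝ univ fun t => p.eval t)
    (hp : 1 < p.natDegree) : 0 ≤ p.leadingCoeff := by
  set secant : ℝ[X] := C (p.eval 1 - p.eval 0) * X + C (p.eval 0)
  have hsecant : ∀ t, 1 < t → secant.eval t ≤ p.eval t := by
    intro t ht
    have := hconv.slope_mono_adjacent (mem_univ 0) (mem_univ t) one_pos ht
    rw [sub_zero, div_one, le_div_iff₀ (by linarith)] at this
    simp only [secant, eval_add, eval_mul, eval_C, eval_X]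
    nlinarith
  have hsecant_deg : secant.degree < p.degree := degree_lt_degree (natDegree_linear_le.trans_lt hp)
  by_contra! hlc
  have hbot : Tendsto (fun t => (p - secant).eval t) atTop atBot :=
    tendsto_atBot_of_leadingCoeff_nonpos _
      (by
        rw [degree_sub_eq_left_of_degree_lt hsecant_deg]
        exact natDegree_pos_iff_degree_pos.1 (by omega))
      (by rw [leadingCoeff_sub_of_degree_lt hsecant_deg]; exact hlc.le)
  obtain ⟨t, hneg, ht⟩ := ((hbot.eventually_lt_atBot 0).and (eventually_gt_atTop 1)).exists
  rw [eval_sub] at hneg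
  linarith [hsecant t ht]

theorem tendsto_atTop_of_convexOn (hconv : ConvexOn ℝ univ fun t => p.eval t)
    (hp : 1 < p.natDegree) : Tendsto (fun t => p.eval t) atTop atTop :=
  tendsto_atTop_of_leadingCoeff_nonneg p (natDegree_pos_iff_degree_pos.1 (by omega))
    (leadingCoeff_nonneg_of_convexOn hconv hp)

theorem strictConvexOn_of_convexOn (hconv : ConvexOn ℝ univ fun t => p.eval t)
    (hp : 1 < p.natDegree) : StrictConvexOn ℝ univ fun t => p.eval t := by
  have hderiv : deriv (fun t => p.eval t) = fun t => (derivative p).eval t := by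
    funext t
    exact Polynomial.deriv p
  have hmono : Monotone fun t => (derivative p).eval t :=
    hderiv ▸ monotoneOn_univ.1 (hconv.monotoneOn_deriv fun t _ => p.differentiableAt)
  refine StrictMono.strictConvexOn_univ_of_deriv p.continuous ?_
  rw [hderiv]
  refine hmono.strictMono_of_injective fun s t hst => ?_
  by_contra hne
  wlog hlt : s < t generalizing s t
  · exact this t s hst.symm (Ne.symm hne) (lt_of_le_of_ne (not_lt.1 hlt) (Ne.symm hne))
  -- a monotone polynomial taking the same value twice is constant in between, hence everywhere
  have hconst : derivative p = C ((derivative p).eval s) := by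
    refine eq_of_infinite_eval_eq _ _ ((Icc_infinite hlt).mono fun r hr => ?_)
    simp only [mem_ofPred_eq, eval_C]
    exact le_antisymm (hmono hr.2 |>.trans_eq hst.symm) (hmono hr.1)
  have := derivative_derivative_eq_zero_iff.1 (by rw [hconst, derivative_C])
  omega

end Polynomial

section ConvexOnLines

variable {E : Type*} [AddCommGroup E] [Module ℝ E] {f : E → ℝ}

theorem ConvexOn.comp_line (hf : ConvexOn ℝ univ f) (x v : E) :
    ConvexOn ℝ univ fun t : ℝ => f (x + t • v) := by
  have hline : (fun t : ℝ => f (x + t • v)) = f ∘ AffineMap.lineMap x (x + v) := by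
    funext t
    simp [AffineMap.lineMap_apply, add_comm]
  exact hline ▸ hf.comp_affineMap _

theorem ConvexOn.exists_le_affine_of_parallel (hf : ConvexOn ℝ univ f) {x v : E} {a b : ℝ}
    (hle : ∀ t : ℝ, f (x + t • v) ≤ b * t + a) (y : E) :
    ∃ c : ℝ, ∀ t : ℝ, f (y + t • v) ≤ b * t + c := by
  refine ⟨(a + f ((2 : ℝ) • y - x)) / 2, fun t => ?_⟩
  have hmid : y + t • v = (1 / 2 : ℝ) • (x + (2 * t) • v) + (1 / 2 : ℝ) • ((2 : ℝ) • y - x) := by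
    module
  calc f (y + t • v) ≤ 1 / 2 * f (x + (2 * t) • v) + 1 / 2 * f ((2 : ℝ) • y - x) := by
        rw [hmid]; exact hf.2 trivial trivial (by norm_num) (by norm_num) (by norm_num)
    _ ≤ 1 / 2 * (b * (2 * t) + a) + 1 / 2 * f ((2 : ℝ) • y - x) := by gcongr; exact hle _
    _ = b * t + (a + f ((2 : ℝ) • y - x)) / 2 := by ring

theorem strictConvexOn_univ_of_forall_line
    (hf : ∀ x v : E, v ≠ 0 → StrictConvexOn ℝ univ fun t : ℝ => f (x + t • v)) :
    StrictConvexOn ℝ univ f := by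
  refine ⟨convex_univ, fun x _ y _ hxy a b ha hb hab => ?_⟩
  obtain rfl : a = 1 - b := by linarith
  have := (hf x (y - x) (sub_ne_zero.2 hxy.symm)).2 (mem_univ 0) (mem_univ 1) zero_ne_one ha hb hab
  convert this using 2 <;> simp only [smul_eq_mul, mul_zero, mul_one, zero_add, zero_smul,
    add_zero, one_smul, add_sub_cancel]
  module

end ConvexOnLines

section Coercive

variable {E : Type*} [NormedAddCommGroup E] [NormedSpace ℝ E] {f : E → ℝ}

theorem Continuous.exists_nat_forall_mem_sphere_exists_le_lt [ProperSpace E]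
    (hcont : Continuous f) {x₀ : E}
    (htend : ∀ v : E, v ≠ 0 → Tendsto (fun t : ℝ => f (x₀ + t • v)) atTop atTop) (β : ℝ) :
    ∃ N : ℕ, ∀ w ∈ sphere (0 : E) 1, ∃ n : ℕ, n ≤ N ∧ β < f (x₀ + (n : ℝ) • w) := by
  have hcover : sphere (0 : E) 1 ⊆ ⋃ n : ℕ, {w | β < f (x₀ + (n : ℝ) • w)} := by
    intro w hw
    have hw0 : w ≠ 0 := ne_zero_of_mem_sphere one_ne_zero ⟨w, hw⟩
    obtain ⟨n, hn⟩ :=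
      (((htend w hw0).comp tendsto_natCast_atTop_atTop).eventually_gt_atTop β).exists
    exact mem_iUnion.2 ⟨n, hn⟩
  obtain ⟨s, hs⟩ := (isCompact_sphere (0 : E) 1).elim_finite_subcover _
    (fun n => isOpen_lt continuous_const (hcont.comp (by fun_prop))) hcover
  refine ⟨s.sup id, fun w hw => ?_⟩
  obtain ⟨n, hn, hlt⟩ : ∃ n ∈ s, β < f (x₀ + (n : ℝ) • w) := by simpa using hs hw
  exact ⟨n, Finset.le_sup (f := id) hn, hlt⟩

theorem ConvexOn.norm_sub_le_of_forall_mem_sphere (hf : ConvexOn ℝ univ f) {x₀ : E} {β : ℝ}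
    {N : ℕ} (hN : ∀ w ∈ sphere (0 : E) 1, ∃ n : ℕ, n ≤ N ∧ β < f (x₀ + (n : ℝ) • w))
    (hx₀ : f x₀ ≤ β) {x : E} (hx : f x ≤ β) : ‖x - x₀‖ ≤ N := by
  by_contra! hfar
  set s := ‖x - x₀‖
  have hs : 0 < s := (Nat.cast_nonneg N).trans_lt hfar
  obtain ⟨n, hnN, hlt⟩ := hN (s⁻¹ • (x - x₀)) (by simp [norm_smul, s, hs.ne'])
  have hseg : x₀ + (n : ℝ) • s⁻¹ • (x - x₀) ∈ segment ℝ x₀ x := by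
    rw [segment_eq_image']
    refine ⟨n / s, ⟨by positivity, (div_le_one hs).2 (by linarith [(Nat.cast_le (α := ℝ)).2 hnN])⟩,
      by rw [smul_smul, div_eq_mul_inv]⟩
  linarith [hf.le_max_of_mem_segment trivial trivial hseg, max_le hx₀ hx]

theorem ConvexOn.isCompact_sublevel_of_tendsto [ProperSpace E] (hf : ConvexOn ℝ univ f)
    (hcont : Continuous f) {x₀ : E}
    (htend : ∀ v : E, v ≠ 0 → Tendsto (fun t : ℝ => f (x₀ + t • v)) atTop atTop) (α : ℝ) :
    IsCompact {x | f x ≤ α} := by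
  obtain ⟨N, hN⟩ := hcont.exists_nat_forall_mem_sphere_exists_le_lt htend (max α (f x₀))
  refine isCompact_of_isClosed_isBounded (isClosed_le hcont continuous_const)
    ((isBounded_closedBall (x := x₀) (r := N)).subset fun x hx => ?_)
  rw [mem_closedBall, dist_eq_norm]
  exact hf.norm_sub_le_of_forall_mem_sphere hN (le_max_right _ _) (le_max_of_le_left hx)

end Coercive

namespace MvPolynomial

section RestrictLine

variable {σ R : Type*} [CommRing R]

noncomputable def restrictLine (p : MvPolynomial σ R) (x v : σ → R) : Polynomial R :=
  aeval (fun i => Polynomial.C (x i) + Polynomial.C (v i) * Polynomial.X) p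

noncomputable def evalHessian [Fintype σ] (p : MvPolynomial σ R) (x : σ → R) : Matrix σ σ R :=
  Matrix.of fun i j => eval x (pderiv i (pderiv j p))

theorem eval_restrictLine (p : MvPolynomial σ R) (x v : σ → R) (t : R) :
    (restrictLine p x v).eval t = eval (x + t • v) p := by
  rw [← Polynomial.coe_aeval_eq_eval, restrictLine, comp_aeval_apply, aeval_eq_eval]
  congr 2
  funext i
  simpa using mul_comm _ _

theorem derivative_aeval [Fintype σ] (p : MvPolynomial σ R) (g : σ → Polynomial R) :
    Polynomial.derivative (aeval g p) =
      ∑ i, aeval g (pderiv i p) * Polynomial.derivative (g i) := by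
  classical
  induction p using MvPolynomial.induction_on with
  | C a => simp
  | add p q hp hq => simp [hp, hq, add_mul, Finset.sum_add_distrib]
  | mul_X p n hp =>
    simp only [map_mul, aeval_X, Polynomial.derivative_mul, hp, pderiv_mul, map_add,
      add_mul, Finset.sum_add_distrib, Finset.sum_mul]
    refine congrArg₂ (· + ·) (Finset.sum_congr rfl fun i _ => by ring) ?_
    simp [pderiv_X, Pi.single_apply]

theorem derivative_restrictLine [Fintype σ] (p : MvPolynomial σ R) (x v : σ → R) :
    Polynomial.derivative (restrictLine p x v) =
      ∑ i, Polynomial.C (v i) * restrictLine (pderiv i p) x v := by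
  rw [restrictLine, derivative_aeval]
  refine Finset.sum_congr rfl fun i _ => ?_
  simp only [restrictLine, Polynomial.derivative_add, Polynomial.derivative_C,
    Polynomial.derivative_mul, Polynomial.derivative_X, zero_add, mul_one, zero_mul]
  exact mul_comm _ _

theorem eval_zero_derivative_derivative_restrictLine [Fintype σ] (p : MvPolynomial σ R)
    (x v : σ → R) :
    (Polynomial.derivative (Polynomial.derivative (restrictLine p x v))).eval 0 =
      v ⬝ᵥ evalHessian p x *ᵥ v := by
  simp only [derivative_restrictLine, map_sum, Polynomial.derivative_mul, Polynomial.derivative_C,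
    zero_mul, zero_add, Finset.mul_sum, Polynomial.eval_finsetSum, Polynomial.eval_mul,
    Polynomial.eval_C, eval_restrictLine, zero_smul, add_zero, dotProduct, mulVec, evalHessian,
    of_apply]
  rw [Finset.sum_comm]
  exact Finset.sum_congr rfl fun i _ => Finset.sum_congr rfl fun j _ => by ring

end RestrictLine

variable {σ : Type*} {p : MvPolynomial σ ℝ}

theorem convexOn_eval_restrictLine (hconv : ConvexOn ℝ univ fun x : σ → ℝ => eval x p)
    (x v : σ → ℝ) : ConvexOn ℝ univ fun t => (restrictLine p x v).eval t := by
  simpa only [eval_restrictLine] using hconv.comp_line x v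

theorem one_lt_natDegree_restrictLine_of_posDef [Fintype σ] {x v : σ → ℝ}
    (hpd : (evalHessian p x).PosDef) (hv : v ≠ 0) : 1 < (restrictLine p x v).natDegree := by
  have hpos := hpd.dotProduct_mulVec_pos hv
  rw [star_trivial, ← eval_zero_derivative_derivative_restrictLine] at hpos
  by_contra! hle
  rw [Polynomial.derivative_derivative_eq_zero_iff.2 hle, Polynomial.eval_zero] at hpos
  exact hpos.false

/-- If `p` were affine on the line through `x`, convexity would bound it above by an affine function
on the parallel line through `u`, where it has degree at least two. -/
theorem one_lt_natDegree_restrictLine [Fintype σ]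
    (hconv : ConvexOn ℝ univ fun x : σ → ℝ => eval x p) {u : σ → ℝ}
    (hpd : (evalHessian p u).PosDef) (x : σ → ℝ) {v : σ → ℝ} (hv : v ≠ 0) :
    1 < (restrictLine p x v).natDegree := by
  by_contra! hle
  obtain ⟨b, a, haff⟩ := Polynomial.exists_eq_X_add_C_of_natDegree_le_one hle
  obtain ⟨c, hc⟩ := hconv.exists_le_affine_of_parallel (x := x) (v := v) (a := a) (b := b)
    (fun t => by simp [← eval_restrictLine, haff]) u
  have hdeg := one_lt_natDegree_restrictLine_of_posDef hpd hv
  set L : Polynomial ℝ := Polynomial.C b * Polynomial.X + Polynomial.C c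
  have hL : L.degree < (restrictLine p u v).degree :=
    Polynomial.degree_lt_degree (Polynomial.natDegree_linear_le.trans_lt hdeg)
  have htend : Tendsto (fun t => (restrictLine p u v - L).eval t) atTop atTop := by
    refine Polynomial.tendsto_atTop_of_leadingCoeff_nonneg _ ?_ ?_
    · rw [Polynomial.degree_sub_eq_left_of_degree_lt hL]
      exact Polynomial.natDegree_pos_iff_degree_pos.1 (by omega)
    · rw [Polynomial.leadingCoeff_sub_of_degree_lt hL]
      exact Polynomial.leadingCoeff_nonneg_of_convexOn (convexOn_eval_restrictLine hconv u v) hdeg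
  obtain ⟨t, ht⟩ := (htend.eventually_gt_atTop 0).exists
  simp only [L, Polynomial.eval_sub, Polynomial.eval_add, Polynomial.eval_mul, Polynomial.eval_C,
    Polynomial.eval_X, eval_restrictLine] at ht
  linarith [hc t]

end MvPolynomial

/-- A convex polynomial whose Hessian is positive definite at some point is coercive
(all sublevel sets are compact) and strictly convex on `ℝ^m`. -/
theorem convex_poly_posdef_hessian_coercive_strictConvex (m : ℕ)
    (h : MvPolynomial (Fin m) ℝ)
    (hconv : ConvexOn ℝ Set.univ (fun x : Fin m → ℝ => eval x h))
    (u' : Fin m → ℝ)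
    (hpd : (Matrix.of fun i j : Fin m => eval u' (pderiv i (pderiv j h))).PosDef) :
    (∀ α : ℝ, IsCompact {x : Fin m → ℝ | eval x h ≤ α}) ∧
      StrictConvexOn ℝ Set.univ (fun x : Fin m → ℝ => eval x h) := by
  change (evalHessian h u').PosDef at hpd
  refine ⟨hconv.isCompact_sublevel_of_tendsto (continuous_eval h) (x₀ := u') fun v hv => ?_,
    strictConvexOn_univ_of_forall_line fun x v hv => ?_⟩
  · simpa only [eval_restrictLine] using Polynomial.tendsto_atTop_of_convexOn
      (convexOn_eval_restrictLine hconv u' v) (one_lt_natDegree_restrictLine_of_posDef hpd hv)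
  · simpa only [eval_restrictLine] using Polynomial.strictConvexOn_of_convexOn
      (convexOn_eval_restrictLine hconv x v) (one_lt_natDegree_restrictLine hconv hpd x hv)
end

section
/- Let h ∈ ℝ[x_1,...,x_m] be an s.o.s-convex polynomial. If h(u) = 0 and ∇h(u) = 0 for some u ∈ ℝ^m, then h is a sum of squares of polynomials. -/
/-!
Restrict `h` to the segment `t ↦ u + t (x - u)`: this gives a polynomial `g` in `t` with
coefficients in `ℝ[x]`, with `g(1) = h`, `g(0) = h(u) = 0` and `g'(0) = ⟨∇h(u), x - u⟩ = 0`.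
Taylor's formula with integral remainder then reads `h = ∫₀¹ (1 - t) g''(t) dt`, and
`g''(t) = (x - u)ᵀ ∇²h(u + t(x - u)) (x - u) = ∑ₖ qₖ(t)²` by s.o.s-convexity. Integration is
replaced by the `ℝ`-linear functional `tᵉ ↦ ∫₀¹ (1 - t) tᵉ dt` on polynomials in `t`; it sends
squares to sums of squares because its Hankel moment matrix is positive semidefinite, being
the Gram matrix of the monomials for the weight `1 - t` on `[0, 1]`.
-/

open MvPolynomial

/-- A polynomial is s.o.s-convex if its Hessian matrix is `H(x)ᵀ H(x)` for some
polynomial matrix `H`. -/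
def SosConvex {m : ℕ} (h : MvPolynomial (Fin m) ℝ) : Prop :=
  ∃ (r : ℕ) (H : Matrix (Fin r) (Fin m) (MvPolynomial (Fin m) ℝ)),
    ∀ i j : Fin m, pderiv i (pderiv j h) = ∑ k : Fin r, H k i * H k j

open scoped Polynomial

theorem isSumSq_sum_sum_gram_smul {ι κ S A : Type*} [Fintype ι] [Fintype κ] [CommSemiring S]
    [CommSemiring A] [Algebra S A] (b : κ → ι → S) (x : ι → A) :
    IsSumSq (∑ i, ∑ j, (∑ k, b k i * b k j) • (x i * x j)) := by
  have h : ∑ i, ∑ j, (∑ k, b k i * b k j) • (x i * x j) =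
      ∑ k, (∑ i, b k i • x i) * ∑ j, b k j • x j := by
    simp_rw [Finset.sum_smul, Finset.sum_mul_sum, smul_mul_smul_comm]
    exact (Finset.sum_congr rfl fun _ _ => Finset.sum_comm).trans Finset.sum_comm
  rw [h]
  exact .sum_mul_self _ _

noncomputable def taylorMoment (e : ℕ) : ℝ := ((e + 1) * (e + 2) : ℝ)⁻¹

theorem integral_one_sub_mul_pow (e : ℕ) :
    ∫ t in (0 : ℝ)..1, (1 - t) * t ^ e = taylorMoment e := by
  have h : ∀ t : ℝ, (1 - t) * t ^ e = t ^ e - t ^ (e + 1) := fun t => by ring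
  simp_rw [h]
  rw [intervalIntegral.integral_sub (intervalIntegral.intervalIntegrable_pow _)
    (intervalIntegral.intervalIntegrable_pow _), integral_pow, integral_pow, taylorMoment]
  field_simp
  push_cast
  ring

section TaylorRemainder

variable {A : Type*} [CommRing A] [Algebra ℝ A]

noncomputable def taylorRemainder : A[X] →ₗ[ℝ] A :=
  Polynomial.lsum fun e => taylorMoment e • LinearMap.id

theorem taylorRemainder_monomial (e : ℕ) (a : A) :
    taylorRemainder (Polynomial.monomial e a) = taylorMoment e • a := by
  simp [taylorRemainder]

theorem eval_one_eq_coeff_add_taylorRemainder (g : A[X]) :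
    g.eval 1 = g.coeff 0 + g.coeff 1 +
      taylorRemainder (Polynomial.derivative (Polynomial.derivative g)) := by
  induction g using Polynomial.induction_on' with
  | add p q hp hq =>
    simp only [Polynomial.eval_add, hp, hq, Polynomial.coeff_add, map_add]
    abel
  | monomial n a =>
    rcases n with _ | _ | k
    · simp
    · simp
    · have hk : taylorMoment k * ((k + 2) * (k + 1)) = 1 := by
        rw [taylorMoment]
        field_simp
      have hcast : a * ((k : A) + 1 + 1) * ((k : A) + 1) = (((k : ℝ) + 2) * (k + 1)) • a := by
        simp only [Algebra.smul_def, map_mul, map_add, map_natCast, map_one, map_ofNat]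
        ring
      simp only [Polynomial.derivative_monomial, taylorRemainder_monomial]
      simp [Polynomial.coeff_monomial, hcast, smul_smul, hk]

theorem taylorRemainder_eq_integral (p : ℝ[X]) :
    taylorRemainder p = ∫ t in (0 : ℝ)..1, (1 - t) * p.eval t := by
  induction p using Polynomial.induction_on' with
  | add p q hp hq =>
    simp only [map_add, hp, hq, Polynomial.eval_add, mul_add]
    rw [intervalIntegral.integral_add ((by fun_prop : Continuous _).intervalIntegrable _ _)
      ((by fun_prop : Continuous _).intervalIntegrable _ _)]
  | monomial e a =>
    simp_rw [taylorRemainder_monomial, Polynomial.eval_monomial, smul_eq_mul, mul_left_comm _ a,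
      intervalIntegral.integral_const_mul, integral_one_sub_mul_pow, mul_comm]

theorem taylorRemainder_mul_self_nonneg (p : ℝ[X]) : 0 ≤ taylorRemainder (p * p) := by
  rw [taylorRemainder_eq_integral]
  refine intervalIntegral.integral_nonneg zero_le_one fun t ht => ?_
  rw [Polynomial.eval_mul]
  exact mul_nonneg (sub_nonneg.mpr ht.2) (mul_self_nonneg _)

theorem taylorRemainder_sum_monomial_mul_self {n : ℕ} (a : Fin n → A) :
    taylorRemainder ((∑ e : Fin n, Polynomial.monomial e (a e)) *
        ∑ f : Fin n, Polynomial.monomial f (a f)) =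
      ∑ e : Fin n, ∑ f : Fin n, taylorMoment (e + f) • (a e * a f) := by
  simp only [Finset.sum_mul_sum, map_sum, Polynomial.monomial_mul_monomial,
    taylorRemainder_monomial]

theorem posSemidef_hankel_taylorMoment (n : ℕ) :
    (Matrix.of fun e f : Fin n => taylorMoment (e + f)).PosSemidef := by
  refine .of_dotProduct_mulVec_nonneg ?_ fun x => ?_
  · ext e f
    simp [add_comm]
  · have h := taylorRemainder_mul_self_nonneg (∑ e : Fin n, Polynomial.monomial e (x e))
    rw [taylorRemainder_sum_monomial_mul_self] at h
    refine h.trans_eq ?_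
    simp only [star_trivial, dotProduct, Matrix.mulVec, Matrix.of_apply, Finset.mul_sum,
      smul_eq_mul]
    exact Finset.sum_congr rfl fun _ _ => Finset.sum_congr rfl fun _ _ => by ring

theorem isSumSq_taylorRemainder_mul_self (q : A[X]) : IsSumSq (taylorRemainder (q * q)) := by
  set n := q.natDegree + 1
  open scoped MatrixOrder in
  obtain ⟨B, hB⟩ :=
    CStarAlgebra.nonneg_iff_eq_star_mul_self.mp (posSemidef_hankel_taylorMoment n).nonneg
  have hBentry : ∀ e f : Fin n, taylorMoment (e + f) = ∑ l, B l e * B l f := fun e f => by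
    simpa [Matrix.mul_apply] using congrFun (congrFun hB e) f
  have hq : q = ∑ e : Fin n, Polynomial.monomial e (q.coeff e) := by
    rw [Fin.sum_univ_eq_sum_range (fun e => Polynomial.monomial e (q.coeff e))]
    exact q.as_sum_range' n (Nat.lt_succ_self _)
  have hexpand := taylorRemainder_sum_monomial_mul_self fun e : Fin n => q.coeff e
  rw [← hq] at hexpand
  simp_rw [hexpand, hBentry]
  exact isSumSq_sum_sum_gram_smul B _

theorem IsSumSq.taylorRemainder {p : A[X]} (hp : IsSumSq p) : IsSumSq (taylorRemainder p) := by
  induction hp with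
  | zero => rw [map_zero]; exact .zero
  | sq_add q _ ih => rw [map_add]; exact (isSumSq_taylorRemainder_mul_self q).add ih

end TaylorRemainder

section ChainRule

variable {σ R A : Type*} [CommSemiring R] [CommSemiring A] [Algebra R A]

theorem MvPolynomial.eval_aeval_polynomial (x : A) (γ : σ → A[X]) (p : MvPolynomial σ R) :
    (aeval γ p).eval x = aeval (fun i => (γ i).eval x) p :=
  comp_aeval_apply γ ((Polynomial.aeval x).restrictScalars R) p

theorem MvPolynomial.derivative_aeval_polynomial [Fintype σ] (γ : σ → A[X])
    (p : MvPolynomial σ R) :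
    Polynomial.derivative (aeval γ p) =
      ∑ i, Polynomial.derivative (γ i) * aeval γ (pderiv i p) := by
  classical
  induction p using MvPolynomial.induction_on with
  | C a => simp
  | add p q hp hq => simp only [map_add, hp, hq, mul_add, Finset.sum_add_distrib]
  | mul_X p j hp =>
    simp only [map_mul, aeval_X, Polynomial.derivative_mul, hp, Derivation.leibniz, pderiv_X,
      Pi.single_apply, smul_eq_mul, mul_ite, mul_one, mul_zero, map_add, apply_ite (aeval γ),
      map_zero, mul_add, Finset.sum_add_distrib, Finset.sum_ite_eq, Finset.mem_univ, if_true,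
      Finset.sum_mul]
    rw [add_comm, mul_comm]
    exact congrArg _ (Finset.sum_congr rfl fun _ _ => by ring)

end ChainRule

section Line

variable {σ R : Type*} [CommRing R]

noncomputable def lineFrom (u : σ → R) (i : σ) : (MvPolynomial σ R)[X] :=
  Polynomial.C (C (u i)) + Polynomial.X * Polynomial.C (X i - C (u i))

theorem eval_one_aeval_lineFrom (u : σ → R) (p : MvPolynomial σ R) :
    (aeval (lineFrom u) p).eval 1 = p := by
  simp [eval_aeval_polynomial, lineFrom]

theorem coeff_zero_aeval_lineFrom (u : σ → R) (p : MvPolynomial σ R) :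
    (aeval (lineFrom u) p).coeff 0 = C (eval u p) := by
  simp only [Polynomial.coeff_zero_eq_eval_zero, eval_aeval_polynomial, lineFrom,
    Polynomial.eval_add, Polynomial.eval_C, Polynomial.eval_mul, Polynomial.eval_X, zero_mul,
    add_zero]
  exact aeval_algebraMap_apply _ u p

theorem derivative_aeval_lineFrom [Fintype σ] (u : σ → R) (p : MvPolynomial σ R) :
    Polynomial.derivative (aeval (lineFrom u) p) =
      ∑ i, Polynomial.C (X i - C (u i)) * aeval (lineFrom u) (pderiv i p) := by
  simp [derivative_aeval_polynomial, lineFrom]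

theorem coeff_one_aeval_lineFrom [Fintype σ] (u : σ → R) (p : MvPolynomial σ R) :
    (aeval (lineFrom u) p).coeff 1 = ∑ i, (X i - C (u i)) * C (eval u (pderiv i p)) := by
  simpa [Polynomial.coeff_derivative, Polynomial.finsetSum_coeff, coeff_zero_aeval_lineFrom]
    using congrArg (Polynomial.coeff · 0) (derivative_aeval_lineFrom u p)

theorem derivative_derivative_aeval_lineFrom [Fintype σ] (u : σ → R) (p : MvPolynomial σ R) :
    Polynomial.derivative (Polynomial.derivative (aeval (lineFrom u) p)) =
      ∑ i, ∑ j, aeval (lineFrom u) (pderiv i (pderiv j p)) *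
        (Polynomial.C (X i - C (u i)) * Polynomial.C (X j - C (u j))) := by
  simp only [derivative_aeval_lineFrom, map_sum, Polynomial.derivative_mul, Polynomial.derivative_C,
    zero_mul, zero_add, Finset.mul_sum]
  rw [Finset.sum_comm]
  exact Finset.sum_congr rfl fun _ _ => Finset.sum_congr rfl fun _ _ => by ring

end Line

theorem SosConvex.isSumSq_derivative_derivative_aeval_lineFrom {m : ℕ}
    {h : MvPolynomial (Fin m) ℝ} (hsc : SosConvex h) (u : Fin m → ℝ) :
    IsSumSq (Polynomial.derivative (Polynomial.derivative (aeval (lineFrom u) h))) := by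
  obtain ⟨r, H, hH⟩ := hsc
  rw [derivative_derivative_aeval_lineFrom]
  simp_rw [hH, map_sum, map_mul, ← smul_eq_mul (a := ∑ _, _)]
  exact isSumSq_sum_sum_gram_smul (fun k i => aeval (lineFrom u) (H k i)) _

/-- An s.o.s-convex polynomial vanishing together with its gradient at some point
is a sum of squares. -/
theorem sosConvex_zero_grad_isSumSq (m : ℕ) (h : MvPolynomial (Fin m) ℝ)
    (hsc : SosConvex h) (u : Fin m → ℝ) (h0 : eval u h = 0)
    (hgrad : ∀ i : Fin m, eval u (pderiv i h) = 0) :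
    IsSumSq h := by
  rw [← eval_one_aeval_lineFrom u h, eval_one_eq_coeff_add_taylorRemainder,
    coeff_zero_aeval_lineFrom, coeff_one_aeval_lineFrom, h0]
  simp only [hgrad, map_zero, mul_zero, Finset.sum_const_zero, zero_add]
  exact (hsc.isSumSq_derivative_derivative_aeval_lineFrom u).taylorRemainder
end

section
/- Under assumptions (A1)-(A2), suppose u* ∈ K minimizes f/g over K with value r*, μ* ∈ M(Y) and η* ∈ ℝ_+^s satisfy strong duality inf_x L_{f,g}(x,μ*,η*) = 0, and X ⊂ ℝ^m contains some minimizer of f/g over K. Then the supremum of ρ over all (ρ, H, η) with H a nonnegative linear functional on the cone of polynomials in y nonnegative on Y, η ∈ ℝ_+^s, and f(x) - ρ·g(x) + H(p(x,·))(x) + ∑_j η_j ψ_j(x) nonnegative on X, equals r*. -/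
open MvPolynomial MeasureTheory

/-! Weak duality: at a feasible point `u` every admissible `(ρ, H, η)` has `H (p u) ≤ 0` and
`∑ ηⱼ ψⱼ u ≤ 0`, so nonnegativity of `f - ρ g + H(p) + ∑ ηⱼ ψⱼ` at a minimizer `u ∈ X` forces
`ρ ≤ f u / g u = r*`. Conversely, integration against the dual measure `μ*` is an admissible `H`,
and strong duality says exactly that `(r*, ∫ · dμ*, η*)` is admissible, so `r*` is attained. -/

section PositiveFunctional

variable {σ : Type*} {Y : Set (σ → ℝ)}

theorem map_nonpos_of_eval_nonpos {H : MvPolynomial σ ℝ →ₗ[ℝ] ℝ}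
    (hH : ∀ q : MvPolynomial σ ℝ, (∀ y ∈ Y, 0 ≤ eval y q) → 0 ≤ H q)
    {q : MvPolynomial σ ℝ} (hq : ∀ y ∈ Y, eval y q ≤ 0) : H q ≤ 0 := by
  have h : 0 ≤ H (-q) := hH (-q) fun y hy => by simpa using hq y hy
  simpa using h

theorem le_div_of_lagrangian_nonneg {E ι : Type*} [Fintype ι] {f g : E → ℝ}
    {ψ : ι → E → ℝ} {p : E → MvPolynomial σ ℝ} {u : E}
    (hψu : ∀ j, ψ j u ≤ 0) (hpu : ∀ y ∈ Y, eval y (p u) ≤ 0) (hgu : 0 < g u)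
    {H : MvPolynomial σ ℝ →ₗ[ℝ] ℝ}
    (hH : ∀ q : MvPolynomial σ ℝ, (∀ y ∈ Y, 0 ≤ eval y q) → 0 ≤ H q)
    {η : ι → ℝ} (hη : ∀ j, 0 ≤ η j) {ρ : ℝ}
    (hL : 0 ≤ f u - ρ * g u + H (p u) + ∑ j, η j * ψ j u) :
    ρ ≤ f u / g u := by
  have hHp : H (p u) ≤ 0 := map_nonpos_of_eval_nonpos hH hpu
  have hsum : ∑ j, η j * ψ j u ≤ 0 :=
    Finset.sum_nonpos fun j _ => mul_nonpos_of_nonneg_of_nonpos (hη j) (hψu j)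
  rw [le_div_iff₀ hgu]
  linarith

end PositiveFunctional

section IntegralFunctional

variable {σ : Type*} {Y : Set (σ → ℝ)} {μ : Measure (σ → ℝ)}

theorem integrable_eval_of_ae_mem_compact [Countable σ] [IsFiniteMeasure μ] (hY : IsCompact Y)
    (hμY : ∀ᵐ y ∂μ, y ∈ Y) (q : MvPolynomial σ ℝ) : Integrable (fun y => eval y q) μ := by
  have h : IntegrableOn (fun y => eval y q) Y μ :=
    (continuous_eval q).continuousOn.integrableOn_compact hY
  rwa [IntegrableOn, Measure.restrict_eq_self_of_ae_mem hμY] at h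

variable (μ) in
noncomputable def evalIntegral
    (hint : ∀ q : MvPolynomial σ ℝ, Integrable (fun y => eval y q) μ) :
    MvPolynomial σ ℝ →ₗ[ℝ] ℝ where
  toFun q := ∫ y, eval y q ∂μ
  map_add' q r := by simpa only [eval_add] using integral_add (hint q) (hint r)
  map_smul' c q := by simp only [smul_eval, RingHom.id_apply, smul_eq_mul, integral_const_mul]

theorem evalIntegral_nonneg {hint : ∀ q : MvPolynomial σ ℝ, Integrable (fun y => eval y q) μ}
    (hμY : ∀ᵐ y ∂μ, y ∈ Y) {q : MvPolynomial σ ℝ} (hq : ∀ y ∈ Y, 0 ≤ eval y q) :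
    0 ≤ evalIntegral μ hint q :=
  integral_nonneg_of_ae (hμY.mono hq)

end IntegralFunctional

theorem conic_reformulation_general (m n s : ℕ)
    (f g : (Fin m → ℝ) → ℝ) (ψ : Fin s → (Fin m → ℝ) → ℝ)
    (Y : Set (Fin n → ℝ)) (hY : IsCompact Y)
    (p : (Fin m → ℝ) → MvPolynomial (Fin n) ℝ)
    (K : Set (Fin m → ℝ))
    (hK : K = {x | (∀ j, ψ j x ≤ 0) ∧ ∀ y ∈ Y, eval y (p x) ≤ 0})
    (hgpos : ∀ x ∈ K, 0 < g x)
    (rstar : ℝ)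
    (μstar : Measure (Fin n → ℝ)) [IsFiniteMeasure μstar] (hμ : μstar Yᶜ = 0)
    (ηstar : Fin s → ℝ) (hηstar : ∀ j, 0 ≤ ηstar j)
    (hinf : IsGLB (Set.range fun x =>
        f x - rstar * g x + (∫ y, eval y (p x) ∂μstar) + ∑ j, ηstar j * ψ j x) 0)
    (X : Set (Fin m → ℝ))
    (hX : ∃ u ∈ X, u ∈ K ∧ f u / g u = rstar) :
    IsLUB {ρ : ℝ | ∃ (H : MvPolynomial (Fin n) ℝ →ₗ[ℝ] ℝ) (η : Fin s → ℝ),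
      (∀ q : MvPolynomial (Fin n) ℝ, (∀ y ∈ Y, 0 ≤ eval y q) → 0 ≤ H q) ∧
      (∀ j, 0 ≤ η j) ∧
      ∀ x ∈ X, 0 ≤ f x - ρ * g x + H (p x) + ∑ j, η j * ψ j x} rstar := by
  have hμY : ∀ᵐ y ∂μstar, y ∈ Y := ae_iff.2 hμ
  refine ⟨?_, fun b hb => hb ⟨evalIntegral μstar (integrable_eval_of_ae_mem_compact hY hμY),
    ηstar, fun q hq => evalIntegral_nonneg hμY hq, hηstar, fun x _ => hinf.1 ⟨x, rfl⟩⟩⟩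
  rintro ρ ⟨H, η, hH, hη, hL⟩
  obtain ⟨u, huX, huK, rfl⟩ := hX
  have hgu := hgpos u huK
  rw [hK] at huK
  exact le_div_of_lagrangian_nonneg huK.1 huK.2 hgu hH hη (hL u huX)

/-- Conic reformulation of the FSIPP problem: under (A1)-(A3), if `X` contains a
minimizer of `f/g` over `K`, the supremum of `ρ` over all `(ρ, H, η)` with `H` a
nonnegative linear functional on the cone of polynomials nonnegative on `Y`,
`η ∈ ℝ₊^s`, and `f - ρ g + H(p(x,·)) + ∑ ηⱼ ψⱼ` nonnegative on `X`, equals `r*`. -/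
theorem conic_reformulation (m n s : ℕ)
    (f g : (Fin m → ℝ) → ℝ) (ψ : Fin s → (Fin m → ℝ) → ℝ)
    (Y : Set (Fin n → ℝ)) (hY : IsCompact Y)
    (p : (Fin m → ℝ) → MvPolynomial (Fin n) ℝ)
    (hf : ConvexOn ℝ Set.univ f) (hg : ConcaveOn ℝ Set.univ g)
    (hψ : ∀ j, ConvexOn ℝ Set.univ (ψ j))
    (hp : ∀ y ∈ Y, ConvexOn ℝ Set.univ fun x => eval y (p x))
    (K : Set (Fin m → ℝ))
    (hK : K = {x | (∀ j, ψ j x ≤ 0) ∧ ∀ y ∈ Y, eval y (p x) ≤ 0})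
    (hgpos : ∀ x ∈ K, 0 < g x)
    (hA2 : (∀ x ∈ K, 0 ≤ f x) ∨
      ∃ (l : (Fin m → ℝ) →ₗ[ℝ] ℝ) (c : ℝ), ∀ x, g x = l x + c)
    (rstar : ℝ) (ustar : Fin m → ℝ) (hustar : ustar ∈ K)
    (hmin : ∀ x ∈ K, rstar ≤ f x / g x) (hval : f ustar / g ustar = rstar)
    (μstar : Measure (Fin n → ℝ)) [IsFiniteMeasure μstar] (hμ : μstar Yᶜ = 0)
    (ηstar : Fin s → ℝ) (hηstar : ∀ j, 0 ≤ ηstar j)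
    (hinf : IsGLB (Set.range fun x =>
        f x - rstar * g x + (∫ y, eval y (p x) ∂μstar) + ∑ j, ηstar j * ψ j x) 0)
    (X : Set (Fin m → ℝ))
    (hX : ∃ u ∈ X, u ∈ K ∧ f u / g u = rstar) :
    IsLUB {ρ : ℝ | ∃ (H : MvPolynomial (Fin n) ℝ →ₗ[ℝ] ℝ) (η : Fin s → ℝ),
      (∀ q : MvPolynomial (Fin n) ℝ, (∀ y ∈ Y, 0 ≤ eval y q) → 0 ≤ H q) ∧
      (∀ j, 0 ≤ η j) ∧
      ∀ x ∈ X, 0 ≤ f x - ρ * g x + H (p x) + ∑ j, η j * ψ j x} rstar :=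
  conic_reformulation_general m n s f g ψ Y hY p K hK hgpos rstar μstar hμ ηstar hηstar hinf X hX
end

section
/- Let C_1 = ∪_{μ ∈ M(Y)} epi(Φ_μ)* where Φ_μ(x) = ∫_Y p(x,y)dμ(y), and C_2 = ∪_{η ∈ ℝ_+^s} epi(∑_j η_j ψ_j)*, where (·)* denotes the convex conjugate and epi the epigraph in ℝ^{m+1}. If p(·,y) is convex for each y ∈ Y, p(x,·) is continuous, Y is compact, and each ψ_j is continuous and convex, then both C_1 and C_1 + C_2 are convex cones in ℝ^{m+1}. -/
open MeasureTheory Pointwise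

/-! Each of `C₁`, `C₂` is the union of `epi φ*` over `φ` ranging in a convex cone of functions
(the `Φ_μ`, resp. the nonnegative combinations of the `ψ_j`), and such a union is itself a convex
cone, since `c • epi φ* = epi (c φ)*` for `c > 0` and `epi φ₁* + epi φ₂* ⊆ epi (φ₁ + φ₂)*`.
That the `Φ_μ` form a convex cone is the additivity and positive homogeneity of `μ ↦ ∫ p x · ∂μ`,
which needs `p x` to be `μ`-integrable: it is continuous on the compact set `Y` carrying `μ`. -/

theorem Continuous.integrable_of_isCompact_of_measure_compl_eq_zero {X E : Type*}
    [TopologicalSpace X] [MeasurableSpace X] [OpensMeasurableSpace X] [NormedAddCommGroup E]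
    [SecondCountableTopologyEither X E] {f : X → E} (hf : Continuous f) {Y : Set X}
    (hY : IsCompact Y) {μ : Measure X} [IsFiniteMeasure μ] (hμ : μ Yᶜ = 0) :
    Integrable f μ := by
  obtain ⟨C, hC⟩ := hY.exists_bound_of_continuousOn hf.continuousOn
  refine ⟨hf.aestronglyMeasurable, .of_bounded (C := C) ?_⟩
  filter_upwards [measure_eq_zero_iff_ae_notMem.mp hμ] with y hy
  exact hC y (by simpa using hy)

theorem PointedCone.mem_hull_range_iff {E ι : Type*} [AddCommMonoid E] [Module ℝ E] [Fintype ι]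
    {v : ι → E} {x : E} :
    x ∈ hull ℝ (Set.range v) ↔ ∃ η : ι → ℝ, (∀ j, 0 ≤ η j) ∧ ∑ j, η j • v j = x := by
  rw [Submodule.mem_span_range_iff_exists_fun]
  constructor
  · rintro ⟨c, rfl⟩
    exact ⟨fun j => c j, fun j => (c j).2, rfl⟩
  · rintro ⟨η, hη, rfl⟩
    exact ⟨fun j => ⟨η j, hη j⟩, rfl⟩

namespace ConvexCone

variable {W V : Type*} [AddCommMonoid W] [Module ℝ W] [AddCommMonoid V] [Module ℝ V]

def conjugateEpigraphs (B : W →ₗ[ℝ] V →ₗ[ℝ] ℝ) (F : ConvexCone ℝ (V → ℝ)) :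
    ConvexCone ℝ (W × ℝ) where
  carrier := {wv | ∃ φ ∈ F, ∀ x, B wv.1 x - φ x ≤ wv.2}
  smul_mem' c hc := by
    rintro ⟨w, v⟩ ⟨φ, hφ, h⟩
    refine ⟨c • φ, F.smul_mem hc hφ, fun x => ?_⟩
    have := mul_le_mul_of_nonneg_left (h x) hc.le
    simp only [Prod.smul_fst, Prod.smul_snd, map_smul, LinearMap.smul_apply, Pi.smul_apply,
      smul_eq_mul] at this ⊢
    linarith
  add_mem' := by
    rintro ⟨w₁, v₁⟩ ⟨φ₁, hφ₁, h₁⟩ ⟨w₂, v₂⟩ ⟨φ₂, hφ₂, h₂⟩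
    refine ⟨φ₁ + φ₂, F.add_mem hφ₁ hφ₂, fun x => ?_⟩
    simp only [Prod.fst_add, Prod.snd_add, map_add, LinearMap.add_apply, Pi.add_apply]
    linarith [h₁ x, h₂ x]

theorem mem_conjugateEpigraphs {B : W →ₗ[ℝ] V →ₗ[ℝ] ℝ} {F : ConvexCone ℝ (V → ℝ)}
    {wv : W × ℝ} : wv ∈ conjugateEpigraphs B F ↔ ∃ φ ∈ F, ∀ x, B wv.1 x - φ x ≤ wv.2 :=
  .rfl

variable {T X : Type*} [TopologicalSpace X] [MeasurableSpace X] [OpensMeasurableSpace X]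

def integralCone {Y : Set X} (hY : IsCompact Y) {p : T → X → ℝ} (hp : ∀ x, Continuous (p x)) :
    ConvexCone ℝ (T → ℝ) where
  carrier := {φ | ∃ μ : Measure X, IsFiniteMeasure μ ∧ μ Yᶜ = 0 ∧ (fun x => ∫ y, p x y ∂μ) = φ}
  smul_mem' c hc := by
    rintro _ ⟨μ, hμ, hμY, rfl⟩
    refine ⟨ENNReal.ofReal c • μ, μ.smul_finite ENNReal.ofReal_ne_top, by simp [hμY],
      funext fun x => ?_⟩
    simp [integral_smul_measure, ENNReal.toReal_ofReal hc.le]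
  add_mem' := by
    rintro _ ⟨μ₁, hμ₁, hμ₁Y, rfl⟩ _ ⟨μ₂, hμ₂, hμ₂Y, rfl⟩
    refine ⟨μ₁ + μ₂, inferInstance, by simp [hμ₁Y, hμ₂Y], funext fun x => ?_⟩
    exact integral_add_measure ((hp x).integrable_of_isCompact_of_measure_compl_eq_zero hY hμ₁Y)
      ((hp x).integrable_of_isCompact_of_measure_compl_eq_zero hY hμ₂Y)

end ConvexCone

theorem characteristic_cones_convexCone_general (m n s : ℕ)
    (Y : Set (Fin n → ℝ)) (hY : IsCompact Y)
    (p : (Fin m → ℝ) → (Fin n → ℝ) → ℝ)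
    (hpcont : ∀ x, Continuous (p x))
    (ψ : Fin s → (Fin m → ℝ) → ℝ)
    (C1 C2 : Set ((Fin m → ℝ) × ℝ))
    (hC1 : C1 = {wv | ∃ μ : Measure (Fin n → ℝ), IsFiniteMeasure μ ∧ μ Yᶜ = 0 ∧
        ∀ x : Fin m → ℝ, (∑ i, wv.1 i * x i) - (∫ y, p x y ∂μ) ≤ wv.2})
    (hC2 : C2 = {wv | ∃ η : Fin s → ℝ, (∀ j, 0 ≤ η j) ∧
        ∀ x : Fin m → ℝ, (∑ i, wv.1 i * x i) - (∑ j, η j * ψ j x) ≤ wv.2}) :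
    (Convex ℝ C1 ∧ ∀ c : ℝ, 0 < c → ∀ w ∈ C1, c • w ∈ C1) ∧
      (Convex ℝ (C1 + C2) ∧ ∀ c : ℝ, 0 < c → ∀ w ∈ C1 + C2, c • w ∈ C1 + C2) := by
  set K₁ := ConvexCone.conjugateEpigraphs (dotProductBilin ℝ ℝ)
    (ConvexCone.integralCone hY hpcont)
  set K₂ := ConvexCone.conjugateEpigraphs (dotProductBilin ℝ ℝ)
    (PointedCone.hull ℝ (Set.range ψ)).toConvexCone
  have hK₁ : C1 = K₁ := by
    ext wv
    simp only [hC1, K₁, SetLike.mem_coe, ConvexCone.mem_conjugateEpigraphs]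
    constructor
    · rintro ⟨μ, hμ, hμY, h⟩
      exact ⟨_, ⟨μ, hμ, hμY, rfl⟩, h⟩
    · rintro ⟨_, ⟨μ, hμ, hμY, rfl⟩, h⟩
      exact ⟨μ, hμ, hμY, h⟩
  have hK₂ : C2 = K₂ := by
    ext wv
    simp only [hC2, K₂, SetLike.mem_coe, ConvexCone.mem_conjugateEpigraphs,
      PointedCone.mem_toConvexCone, PointedCone.mem_hull_range_iff]
    constructor
    · rintro ⟨η, hη, h⟩
      exact ⟨_, ⟨η, hη, rfl⟩, fun x => by simpa [Finset.sum_apply, dotProduct] using h x⟩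
    · rintro ⟨_, ⟨η, hη, rfl⟩, h⟩
      exact ⟨η, hη, fun x => by simpa [Finset.sum_apply, dotProduct] using h x⟩
  have isCone (K : ConvexCone ℝ ((Fin m → ℝ) × ℝ)) :
      Convex ℝ (K : Set ((Fin m → ℝ) × ℝ)) ∧ ∀ c : ℝ, 0 < c → ∀ w ∈ K, c • w ∈ K :=
    ⟨K.convex, fun _ hc _ hw => K.smul_mem hc hw⟩
  rw [hK₁, hK₂, ← ConvexCone.coe_add]
  exact ⟨isCone K₁, isCone (K₁ + K₂)⟩

/-- The characteristic cones `C₁` and `C₁ + C₂` associated with a convex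
semi-infinite system are convex cones in `ℝ^{m+1}`. -/
theorem characteristic_cones_convexCone (m n s : ℕ)
    (Y : Set (Fin n → ℝ)) (hY : IsCompact Y)
    (p : (Fin m → ℝ) → (Fin n → ℝ) → ℝ)
    (hpconv : ∀ y ∈ Y, ConvexOn ℝ Set.univ fun x => p x y)
    (hpcont : ∀ x, Continuous (p x))
    (ψ : Fin s → (Fin m → ℝ) → ℝ)
    (hψcont : ∀ j, Continuous (ψ j))
    (hψconv : ∀ j, ConvexOn ℝ Set.univ (ψ j))
    (C1 C2 : Set ((Fin m → ℝ) × ℝ))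
    (hC1 : C1 = {wv | ∃ μ : Measure (Fin n → ℝ), IsFiniteMeasure μ ∧ μ Yᶜ = 0 ∧
        ∀ x : Fin m → ℝ, (∑ i, wv.1 i * x i) - (∫ y, p x y ∂μ) ≤ wv.2})
    (hC2 : C2 = {wv | ∃ η : Fin s → ℝ, (∀ j, 0 ≤ η j) ∧
        ∀ x : Fin m → ℝ, (∑ i, wv.1 i * x i) - (∑ j, η j * ψ j x) ≤ wv.2}) :
    (Convex ℝ C1 ∧ ∀ c : ℝ, 0 < c → ∀ w ∈ C1, c • w ∈ C1) ∧
      (Convex ℝ (C1 + C2) ∧ ∀ c : ℝ, 0 < c → ∀ w ∈ C1 + C2, c • w ∈ C1 + C2) :=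
  characteristic_cones_convexCone_general m n s Y hY p hpcont ψ C1 C2 hC1 hC2
end

section
/- Under the SCCCQ (C_1 + C_2 closed), strong duality holds for the convex semi-infinite program with dual attainment: if r* = inf{h(x) : ψ_j(x) ≤ 0 ∀j, p(x,y) ≤ 0 ∀y ∈ Y} is finite, then there exist μ* ∈ M(Y) and η* ∈ ℝ_+^s such that r* = inf_{x∈ℝ^m} { h(x) + ∫_Y p(x,y)dμ*(y) + ∑_{j=1}^s η*_j ψ_j(x) }. -/
/-!
Fenchel duality for `h` restricted to the feasible set `K` yields `w, a` with `h* w ≤ a` and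
`a + r* ≤ ⟨w, x⟩` on `K`, i.e. `(-w, -a - r*) ∈ epi δ_K*`. The constraint qualification is what
puts this point into `C₁ + C₂`: were it outside this closed convex set, a separating hyperplane,
tilted with the help of a feasible point so as to be non-vertical, would be given by some `x`;
since `C₁ + C₂` contains the rays spanned by subgradients of the constraints, the separation bound
forces `x` to be feasible, contradicting `(-w, -a - r*) ∈ epi δ_K*`. Splitting the point as an
element of `epi (∫ p dμ)* + epi (∑ η ψ)*` produces the multipliers `μ, η`.
-/

open MeasureTheory Pointwise Set

section ConjugateEpigraph

variable {ι : Type*} [Fintype ι]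

/-- `epi f*`, described without forming the extended-real-valued conjugate `f*`. -/
def conjugateEpigraph (f : (ι → ℝ) → ℝ) : Set ((ι → ℝ) × ℝ) :=
  {q | ∀ x, q.1 ⬝ᵥ x - f x ≤ q.2}

lemma add_mem_conjugateEpigraph {f g : (ι → ℝ) → ℝ} {q q' : (ι → ℝ) × ℝ}
    (hq : q ∈ conjugateEpigraph f) (hq' : q' ∈ conjugateEpigraph g) :
    q + q' ∈ conjugateEpigraph (f + g) := fun x => by
  simp only [Prod.fst_add, Prod.snd_add, add_dotProduct, Pi.add_apply]
  linarith [hq x, hq' x]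

lemma smul_mem_conjugateEpigraph {f : (ι → ℝ) → ℝ} {q : (ι → ℝ) × ℝ} {t : ℝ} (ht : 0 ≤ t)
    (hq : q ∈ conjugateEpigraph f) : t • q ∈ conjugateEpigraph (t • f) := fun x => by
  simp only [Prod.smul_fst, Prod.smul_snd, smul_dotProduct, Pi.smul_apply, smul_eq_mul]
  nlinarith [hq x]

lemma zero_mem_conjugateEpigraph_zero {t : ℝ} (ht : 0 ≤ t) :
    ((0 : ι → ℝ), t) ∈ conjugateEpigraph (0 : (ι → ℝ) → ℝ) := fun x => by
  simpa using ht

lemma convex_biUnion_conjugateEpigraph {F : Set ((ι → ℝ) → ℝ)} (hF : Convex ℝ F) :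
    Convex ℝ (⋃ f ∈ F, conjugateEpigraph f) := by
  simp only [Convex, StarConvex, mem_iUnion₂]
  rintro q ⟨f, hf, hq⟩ q' ⟨f', hf', hq'⟩ a b ha hb hab
  exact ⟨a • f + b • f', hF hf hf' ha hb hab, add_mem_conjugateEpigraph
    (smul_mem_conjugateEpigraph ha hq) (smul_mem_conjugateEpigraph hb hq')⟩

lemma exists_mem_conjugateEpigraph_add_of_mem_add {F₁ F₂ : Set ((ι → ℝ) → ℝ)}
    {q : (ι → ℝ) × ℝ} (hq : q ∈ (⋃ f ∈ F₁, conjugateEpigraph f) + ⋃ f ∈ F₂, conjugateEpigraph f) :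
    ∃ f₁ ∈ F₁, ∃ f₂ ∈ F₂, q ∈ conjugateEpigraph (f₁ + f₂) := by
  simp only [mem_add, mem_iUnion₂] at hq
  obtain ⟨q₁, ⟨f₁, hf₁, hq₁⟩, q₂, ⟨f₂, hf₂, hq₂⟩, rfl⟩ := hq
  exact ⟨f₁, hf₁, f₂, hf₂, add_mem_conjugateEpigraph hq₁ hq₂⟩

lemma convex_setOf_forall_dotProduct_le (D : Set ((ι → ℝ) × ℝ)) :
    Convex ℝ {x | ∀ q ∈ D, q.1 ⬝ᵥ x ≤ q.2} := by
  intro x hx z hz a b ha hb hab q hq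
  calc q.1 ⬝ᵥ (a • x + b • z) = a * q.1 ⬝ᵥ x + b * q.1 ⬝ᵥ z := by
        simp [dotProduct_add, dotProduct_smul]
    _ ≤ a * q.2 + b * q.2 := by gcongr <;> [exact hx q hq; exact hz q hq]
    _ = q.2 := by rw [← add_mul, hab, one_mul]

lemma ContinuousLinearMap.exists_apply_eq_dotProduct_add (φ : ((ι → ℝ) × ℝ) →L[ℝ] ℝ) :
    ∃ g : ι → ℝ, ∀ q, φ q = g ⬝ᵥ q.1 + φ (0, 1) * q.2 := by
  classical
  refine ⟨fun i => φ (Pi.single i 1, 0), fun ⟨w, v⟩ => ?_⟩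
  have hw : ((w, v) : (ι → ℝ) × ℝ) = ∑ i, w i • (Pi.single i 1, 0) + v • (0, 1) := by
    ext i <;> simp [Prod.fst_sum, Prod.snd_sum, Finset.sum_apply, Pi.single_apply]
  simp only [congrArg φ hw, map_add, map_sum, map_smul, smul_eq_mul, dotProduct, mul_comm]

lemma ConvexOn.exists_mem_conjugateEpigraph_add_le_dotProduct {f : (ι → ℝ) → ℝ}
    (hf : ConvexOn ℝ univ f) {K : Set (ι → ℝ)} (hK : Convex ℝ K) {x₀ : ι → ℝ} (hx₀ : x₀ ∈ K)
    {r : ℝ} (hr : ∀ x ∈ K, r ≤ f x) :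
    ∃ w a, (w, a) ∈ conjugateEpigraph f ∧ ∀ x ∈ K, a + r ≤ w ⬝ᵥ x := by
  have hfc : Continuous f := continuousOn_univ.1 (hf.continuousOn isOpen_univ)
  have hdisj : Disjoint {q : (ι → ℝ) × ℝ | f q.1 < q.2} (K ×ˢ Iic r) :=
    disjoint_left.2 fun q hqf hqK => (hqf.trans_le hqK.2).not_ge (hr q.1 hqK.1)
  obtain ⟨φ, u, hφf, hφK⟩ := geometric_hahn_banach_open (by simpa using hf.convex_strict_epigraph)
    (isOpen_lt (hfc.comp continuous_fst) continuous_snd) (hK.prod (convex_Iic r)) hdisj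
  obtain ⟨g, hg⟩ := φ.exists_apply_eq_dotProduct_add
  set k := -φ (0, 1)
  have hf' : ∀ x t, f x < t → g ⬝ᵥ x - u < k * t := fun x t ht => by
    linarith [hg (x, t), hφf (x, t) ht]
  have hK' : ∀ x ∈ K, u + k * r ≤ g ⬝ᵥ x := fun x hx => by
    linarith [hg (x, r), hφK (x, r) ⟨hx, le_refl r⟩]
  have hk : 0 < k := by
    have := hf' x₀ (max (f x₀) r + 1) (by linarith [le_max_left (f x₀) r])
    nlinarith [le_max_right (f x₀) r, hK' x₀ hx₀]
  refine ⟨k⁻¹ • g, k⁻¹ * u, fun x => ?_, fun x hx => ?_⟩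
  · have : (g ⬝ᵥ x - u) / k ≤ f x := le_of_forall_gt_imp_ge_of_dense fun t ht =>
      (div_le_iff₀' hk).2 (hf' x t ht).le
    simp only [smul_dotProduct, smul_eq_mul]
    rw [div_le_iff₀ hk] at this
    field_simp
    linarith
  · simp only [smul_dotProduct, smul_eq_mul]
    field_simp
    linarith [hK' x hx]

lemma ConvexOn.exists_mem_conjugateEpigraph_dotProduct_sub {f : (ι → ℝ) → ℝ}
    (hf : ConvexOn ℝ univ f) (x₀ : ι → ℝ) :
    ∃ w, (w, w ⬝ᵥ x₀ - f x₀) ∈ conjugateEpigraph f := by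
  obtain ⟨w, a, hwa, hx₀⟩ := hf.exists_mem_conjugateEpigraph_add_le_dotProduct
    (convex_singleton x₀) rfl fun x hx => by rw [mem_singleton_iff.1 hx]
  exact ⟨w, fun x => (hwa x).trans (by linarith [hx₀ x₀ rfl])⟩

lemma ConvexOn.nonpos_of_bddAbove_dotProduct_sub {f : (ι → ℝ) → ℝ} (hf : ConvexOn ℝ univ f)
    {D : Set ((ι → ℝ) × ℝ)} (hD : ∀ t : ℝ, 0 ≤ t → conjugateEpigraph (t • f) ⊆ D)
    {x : ι → ℝ} (hx : BddAbove ((fun q => q.1 ⬝ᵥ x - q.2) '' D)) : f x ≤ 0 := by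
  obtain ⟨w, hw⟩ := hf.exists_mem_conjugateEpigraph_dotProduct_sub x
  obtain ⟨u, hu⟩ := hx
  have hray : ∀ t : ℝ, 0 ≤ t → t * f x ≤ u := fun t ht => by
    have := hu (mem_image_of_mem _ (hD t ht (smul_mem_conjugateEpigraph ht hw)))
    simpa [smul_dotProduct, mul_sub] using this
  by_contra! hfx
  have := hray ((|u| + 1) / f x) (by positivity)
  rw [div_mul_cancel₀ _ hfx.ne'] at this
  linarith [le_abs_self u]

lemma mem_of_forall_bddAbove_dotProduct_sub {D : Set ((ι → ℝ) × ℝ)} (hDc : IsClosed D)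
    (hD : Convex ℝ D) (hD0 : ∀ t : ℝ, 0 ≤ t → ((0 : ι → ℝ), t) ∈ D) {x₀ : ι → ℝ}
    (hx₀ : ∀ q ∈ D, q.1 ⬝ᵥ x₀ ≤ q.2) {w : ι → ℝ} {v : ℝ}
    (hwv : ∀ x, BddAbove ((fun q => q.1 ⬝ᵥ x - q.2) '' D) → w ⬝ᵥ x ≤ v) : (w, v) ∈ D := by
  by_contra hwvD
  obtain ⟨φ, u, hφD, hφwv⟩ := geometric_hahn_banach_closed_point hD hDc hwvD
  obtain ⟨g, hg⟩ := φ.exists_apply_eq_dotProduct_add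
  set c := φ (0, 1)
  have hu : 0 < u := by simpa [hg] using hφD _ (hD0 0 le_rfl)
  have hc : c ≤ 0 := by
    by_contra! hc
    have := hφD _ (hD0 (u / c) (div_nonneg hu.le hc.le))
    rw [hg, mul_div_cancel₀ _ hc.ne'] at this
    simp at this
  -- Tilting `φ` by `ε (q.2 - q.1 ⬝ᵥ x₀)`, which is nonnegative on `D`, makes the separating
  -- hyperplane non-vertical.
  obtain ⟨ε, hε, hεgap⟩ := exists_pos_mul_lt (sub_pos.2 hφwv) (v - w ⬝ᵥ x₀)
  have hk : 0 < ε - c := by linarith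
  set x := (ε - c)⁻¹ • (g + ε • x₀)
  have hx : ∀ q : (ι → ℝ) × ℝ, (ε - c) * (q.1 ⬝ᵥ x - q.2) = φ q - ε * (q.2 - q.1 ⬝ᵥ x₀) :=
    fun q => by
      rw [hg]
      simp only [x, dotProduct_smul, dotProduct_add, dotProduct_comm q.1 g, smul_eq_mul]
      field_simp
      ring
  have hbdd : BddAbove ((fun q => q.1 ⬝ᵥ x - q.2) '' D) :=
    ⟨u / (ε - c), forall_mem_image.2 fun q hq => by
      rw [le_div_iff₀ hk, mul_comm]
      nlinarith [hx q, hφD q hq, hx₀ q hq]⟩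
  nlinarith [hx (w, v), hwv x hbdd]

theorem ConvexOn.exists_mem_conjugateEpigraph_neg_mem {D : Set ((ι → ℝ) × ℝ)}
    (hDc : IsClosed D) (hD : Convex ℝ D) (hD0 : ∀ t : ℝ, 0 ≤ t → ((0 : ι → ℝ), t) ∈ D)
    {K : Set (ι → ℝ)} (hKne : K.Nonempty) (hKD : ∀ x ∈ K, ∀ q ∈ D, q.1 ⬝ᵥ x ≤ q.2)
    (hDK : ∀ x, BddAbove ((fun q => q.1 ⬝ᵥ x - q.2) '' D) → x ∈ K)
    {f : (ι → ℝ) → ℝ} (hf : ConvexOn ℝ univ f) {r : ℝ} (hr : ∀ x ∈ K, r ≤ f x) :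
    ∃ w a, (w, a) ∈ conjugateEpigraph f ∧ (-w, -a - r) ∈ D := by
  obtain ⟨x₀, hx₀⟩ := hKne
  have hK : K = {x | ∀ q ∈ D, q.1 ⬝ᵥ x ≤ q.2} := Set.ext fun x =>
    ⟨hKD x, fun hx => hDK x ⟨0, forall_mem_image.2 fun q hq => sub_nonpos.2 (hx q hq)⟩⟩
  obtain ⟨w, a, hwa, hwK⟩ := hf.exists_mem_conjugateEpigraph_add_le_dotProduct
    (hK ▸ convex_setOf_forall_dotProduct_le D) hx₀ hr
  refine ⟨w, a, hwa, mem_of_forall_bddAbove_dotProduct_sub hDc hD hD0 (hKD x₀ hx₀) fun x hx => ?_⟩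
  linarith [neg_dotProduct w x, hwK x (hDK x hx)]

theorem ConvexOn.exists_isGLB_range_add_add {F₁ F₂ : Set ((ι → ℝ) → ℝ)}
    (hF₁ : Convex ℝ F₁) (hF₂ : Convex ℝ F₂) (h0₁ : 0 ∈ F₁) (h0₂ : 0 ∈ F₂)
    (hclosed : IsClosed ((⋃ f ∈ F₁, conjugateEpigraph f) + ⋃ f ∈ F₂, conjugateEpigraph f))
    {K : Set (ι → ℝ)} (hKF : ∀ x ∈ K, ∀ f ∈ F₁ ∪ F₂, f x ≤ 0)
    (hK : ∀ x, (∀ g, ConvexOn ℝ univ g → (∀ t : ℝ, 0 ≤ t → t • g ∈ F₁ ∪ F₂) → g x ≤ 0) → x ∈ K)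
    {h : (ι → ℝ) → ℝ} (hh : ConvexOn ℝ univ h) {r : ℝ} (hr : IsGLB (h '' K) r) :
    ∃ f₁ ∈ F₁, ∃ f₂ ∈ F₂, IsGLB (range fun x => h x + f₁ x + f₂ x) r := by
  set C₁ := ⋃ f ∈ F₁, conjugateEpigraph f
  set C₂ := ⋃ f ∈ F₂, conjugateEpigraph f
  have hC₁ : ((0 : ι → ℝ), (0 : ℝ)) ∈ C₁ := mem_biUnion h0₁ (zero_mem_conjugateEpigraph_zero le_rfl)
  have hC₂ : ((0 : ι → ℝ), (0 : ℝ)) ∈ C₂ := mem_biUnion h0₂ (zero_mem_conjugateEpigraph_zero le_rfl)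
  have hD0 : ∀ t : ℝ, 0 ≤ t → ((0 : ι → ℝ), t) ∈ C₁ + C₂ := fun t ht => by
    simpa using add_mem_add (mem_biUnion h0₁ (zero_mem_conjugateEpigraph_zero ht)) hC₂
  have hray : ∀ g, (∀ t : ℝ, 0 ≤ t → t • g ∈ F₁ ∪ F₂) →
      ∀ t : ℝ, 0 ≤ t → conjugateEpigraph (t • g) ⊆ C₁ + C₂ := fun g hg t ht => by
    rcases hg t ht with hg | hg
    · exact (subset_biUnion_of_mem hg).trans (subset_add_left _ hC₂)
    · exact (subset_biUnion_of_mem hg).trans (subset_add_right _ hC₁)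
  have hKD : ∀ x ∈ K, ∀ q ∈ C₁ + C₂, q.1 ⬝ᵥ x ≤ q.2 := fun x hx q hq => by
    obtain ⟨f₁, hf₁, f₂, hf₂, hq⟩ := exists_mem_conjugateEpigraph_add_of_mem_add hq
    linarith [hq x, hKF x hx f₁ (.inl hf₁), hKF x hx f₂ (.inr hf₂), Pi.add_apply f₁ f₂ x]
  obtain ⟨w, a, hwa, hD⟩ := hh.exists_mem_conjugateEpigraph_neg_mem hclosed
    ((convex_biUnion_conjugateEpigraph hF₁).add (convex_biUnion_conjugateEpigraph hF₂))
    hD0 hr.nonempty.of_image hKD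
    (fun x hx => hK x fun g hg hgF => hg.nonpos_of_bddAbove_dotProduct_sub (hray g hgF) hx)
    fun x hx => hr.1 (mem_image_of_mem h hx)
  obtain ⟨f₁, hf₁, f₂, hf₂, hq⟩ := exists_mem_conjugateEpigraph_add_of_mem_add hD
  refine ⟨f₁, hf₁, f₂, hf₂, ?_, fun b hb => hr.2 ?_⟩
  · rintro _ ⟨x, rfl⟩
    have := add_mem_conjugateEpigraph hwa hq x
    simp only [Prod.fst_add, Prod.snd_add, add_neg_cancel, zero_dotProduct, Pi.add_apply] at this
    linarith
  · rintro _ ⟨x, hx, rfl⟩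
    linarith [hb ⟨x, rfl⟩, hKF x hx f₁ (.inl hf₁), hKF x hx f₂ (.inr hf₂)]

end ConjugateEpigraph

section Multipliers

variable {E X κ : Type*}

section Measures

variable [MeasurableSpace X]

def integralCombinations (p : E → X → ℝ) (Y : Set X) : Set (E → ℝ) :=
  (fun μ x => ∫ y, p x y ∂μ) '' {μ : Measure X | IsFiniteMeasure μ ∧ μ Yᶜ = 0}

lemma ContinuousOn.integrable_of_measure_compl_eq_zero [TopologicalSpace X]
    [OpensMeasurableSpace X] [T2Space X] {μ : Measure X} [IsFiniteMeasure μ] {Y : Set X}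
    {f : X → ℝ} (hf : ContinuousOn f Y) (hY : IsCompact Y) (hμY : μ Yᶜ = 0) : Integrable f μ := by
  simpa [IntegrableOn, Measure.restrict_eq_self_of_ae_mem (mem_ae_iff.2 hμY)]
    using hf.integrableOn_compact (μ := μ) hY

lemma convex_integralCombinations [TopologicalSpace X] [OpensMeasurableSpace X] [T2Space X]
    {p : E → X → ℝ} {Y : Set X} (hY : IsCompact Y) (hp : ∀ x, ContinuousOn (p x) Y) :
    Convex ℝ (integralCombinations p Y) := by
  rintro _ ⟨μ, ⟨hμ, hμY⟩, rfl⟩ _ ⟨ν, ⟨hν, hνY⟩, rfl⟩ a b ha hb -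
  refine ⟨a.toNNReal • μ + b.toNNReal • ν, ⟨inferInstance, by simp [hμY, hνY]⟩, ?_⟩
  funext x
  have hint {ρ : Measure X} [IsFiniteMeasure ρ] (hρY : ρ Yᶜ = 0) (c : ℝ) :
      Integrable (p x) (c.toNNReal • ρ) :=
    ((hp x).integrable_of_measure_compl_eq_zero hY hρY).smul_measure_nnreal
  simp [integral_add_measure (hint hμY a) (hint hνY b), integral_smul_nnreal_measure,
    NNReal.smul_def, ha, hb]

lemma zero_mem_integralCombinations (p : E → X → ℝ) (Y : Set X) :
    0 ∈ integralCombinations p Y :=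
  ⟨0, ⟨inferInstance, rfl⟩, by ext; simp⟩

lemma smul_mem_integralCombinations [MeasurableSingletonClass X] (p : E → X → ℝ) {Y : Set X}
    {y : X} (hy : y ∈ Y) {t : ℝ} (ht : 0 ≤ t) : t • (fun x => p x y) ∈ integralCombinations p Y :=
  ⟨t.toNNReal • Measure.dirac y, ⟨inferInstance, by simp [hy]⟩, by
    funext x
    simp [integral_smul_nnreal_measure, NNReal.smul_def, ht]⟩

lemma apply_nonpos_of_mem_integralCombinations {p : E → X → ℝ} {Y : Set X} {f : E → ℝ}
    (hf : f ∈ integralCombinations p Y) {x : E} (hx : ∀ y ∈ Y, p x y ≤ 0) : f x ≤ 0 := by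
  obtain ⟨μ, ⟨-, hμY⟩, rfl⟩ := hf
  exact integral_nonpos_of_ae (Filter.mem_of_superset (mem_ae_iff.2 hμY) hx)

end Measures

section Conic

variable [Fintype κ]

def conicCombinations (ψ : κ → E → ℝ) : Set (E → ℝ) :=
  (fun η x => ∑ j, η j * ψ j x) '' {η : κ → ℝ | ∀ j, 0 ≤ η j}

lemma convex_conicCombinations (ψ : κ → E → ℝ) : Convex ℝ (conicCombinations ψ) := by
  rintro _ ⟨η, hη, rfl⟩ _ ⟨ζ, hζ, rfl⟩ a b ha hb -
  refine ⟨a • η + b • ζ, fun j => add_nonneg (mul_nonneg ha (hη j)) (mul_nonneg hb (hζ j)), ?_⟩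
  funext x
  simp [add_mul, mul_assoc, Finset.sum_add_distrib, Finset.mul_sum]

lemma zero_mem_conicCombinations (ψ : κ → E → ℝ) : 0 ∈ conicCombinations ψ :=
  ⟨0, fun _ => le_rfl, by ext; simp⟩

lemma smul_mem_conicCombinations [DecidableEq κ] (ψ : κ → E → ℝ) (j : κ) {t : ℝ} (ht : 0 ≤ t) :
    t • ψ j ∈ conicCombinations ψ :=
  ⟨Pi.single j t, fun k => by by_cases hk : k = j <;> simp [hk, ht], by
    funext x
    simp [Pi.single_apply]⟩

lemma apply_nonpos_of_mem_conicCombinations {ψ : κ → E → ℝ} {f : E → ℝ}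
    (hf : f ∈ conicCombinations ψ) {x : E} (hx : ∀ j, ψ j x ≤ 0) : f x ≤ 0 := by
  obtain ⟨η, hη, rfl⟩ := hf
  exact Finset.sum_nonpos fun j _ => mul_nonpos_of_nonneg_of_nonpos (hη j) (hx j)

end Conic

end Multipliers

theorem scccq_strong_duality_general (m n s : ℕ)
    (h : (Fin m → ℝ) → ℝ) (hhconv : ConvexOn ℝ Set.univ h)
    (ψ : Fin s → (Fin m → ℝ) → ℝ)
    (hψconv : ∀ j, ConvexOn ℝ Set.univ (ψ j))
    (Y : Set (Fin n → ℝ)) (hY : IsCompact Y)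
    (p : (Fin m → ℝ) → (Fin n → ℝ) → ℝ)
    (hpconv : ∀ y ∈ Y, ConvexOn ℝ Set.univ fun x => p x y)
    (hpcont : ∀ x, Continuous (p x))
    (K : Set (Fin m → ℝ))
    (hK : K = {x | (∀ j, ψ j x ≤ 0) ∧ ∀ y ∈ Y, p x y ≤ 0})
    (C1 C2 : Set ((Fin m → ℝ) × ℝ))
    (hC1 : C1 = {wv | ∃ μ : Measure (Fin n → ℝ), IsFiniteMeasure μ ∧ μ Yᶜ = 0 ∧
        ∀ x : Fin m → ℝ, (∑ i, wv.1 i * x i) - (∫ y, p x y ∂μ) ≤ wv.2})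
    (hC2 : C2 = {wv | ∃ η : Fin s → ℝ, (∀ j, 0 ≤ η j) ∧
        ∀ x : Fin m → ℝ, (∑ i, wv.1 i * x i) - (∑ j, η j * ψ j x) ≤ wv.2})
    (hSCCCQ : IsClosed (C1 + C2))
    (rstar : ℝ) (hr : IsGLB (h '' K) rstar) :
    ∃ (μ : Measure (Fin n → ℝ)) (η : Fin s → ℝ),
      IsFiniteMeasure μ ∧ μ Yᶜ = 0 ∧ (∀ j, 0 ≤ η j) ∧
      IsGLB (Set.range fun x : Fin m → ℝ =>
        h x + (∫ y, p x y ∂μ) + ∑ j, η j * ψ j x) rstar := by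
  subst hK hC1 hC2
  have hSCCCQ' : IsClosed ((⋃ f ∈ integralCombinations p Y, conjugateEpigraph f) +
      ⋃ f ∈ conicCombinations ψ, conjugateEpigraph f) := by
    convert hSCCCQ using 2 <;> ext <;>
      simp only [integralCombinations, conicCombinations, biUnion_image, mem_iUnion₂, mem_ofPred_eq,
        exists_prop, and_assoc] <;> rfl
  obtain ⟨_, ⟨μ, ⟨hμ, hμY⟩, rfl⟩, _, ⟨η, hη, rfl⟩, hglb⟩ := hhconv.exists_isGLB_range_add_add
    (convex_integralCombinations hY fun x => (hpcont x).continuousOn) (convex_conicCombinations ψ)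
    (zero_mem_integralCombinations p Y) (zero_mem_conicCombinations ψ) hSCCCQ'
    (fun x hx f hf => hf.elim (apply_nonpos_of_mem_integralCombinations · hx.2)
      (apply_nonpos_of_mem_conicCombinations · hx.1))
    (fun x hx => And.intro
      (fun j => hx _ (hψconv j) fun t ht => .inr (smul_mem_conicCombinations ψ j ht))
      (fun y hy => hx _ (hpconv y hy) fun t ht => .inl (smul_mem_integralCombinations p hy ht)))
    hr
  exact ⟨μ, η, hμ, hμY, hη, hglb⟩

/-- Under the SCCCQ (`C₁ + C₂` closed), strong duality with dual attainment holds
for the convex semi-infinite program. -/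
theorem scccq_strong_duality (m n s : ℕ)
    (h : (Fin m → ℝ) → ℝ) (hhcont : Continuous h) (hhconv : ConvexOn ℝ Set.univ h)
    (ψ : Fin s → (Fin m → ℝ) → ℝ)
    (hψcont : ∀ j, Continuous (ψ j)) (hψconv : ∀ j, ConvexOn ℝ Set.univ (ψ j))
    (Y : Set (Fin n → ℝ)) (hY : IsCompact Y)
    (p : (Fin m → ℝ) → (Fin n → ℝ) → ℝ)
    (hpconv : ∀ y ∈ Y, ConvexOn ℝ Set.univ fun x => p x y)
    (hplsc : ∀ y ∈ Y, LowerSemicontinuous fun x => p x y)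
    (hpcont : ∀ x, Continuous (p x))
    (K : Set (Fin m → ℝ))
    (hK : K = {x | (∀ j, ψ j x ≤ 0) ∧ ∀ y ∈ Y, p x y ≤ 0})
    (hKne : K.Nonempty)
    (C1 C2 : Set ((Fin m → ℝ) × ℝ))
    (hC1 : C1 = {wv | ∃ μ : Measure (Fin n → ℝ), IsFiniteMeasure μ ∧ μ Yᶜ = 0 ∧
        ∀ x : Fin m → ℝ, (∑ i, wv.1 i * x i) - (∫ y, p x y ∂μ) ≤ wv.2})
    (hC2 : C2 = {wv | ∃ η : Fin s → ℝ, (∀ j, 0 ≤ η j) ∧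
        ∀ x : Fin m → ℝ, (∑ i, wv.1 i * x i) - (∑ j, η j * ψ j x) ≤ wv.2})
    (hSCCCQ : IsClosed (C1 + C2))
    (rstar : ℝ) (hr : IsGLB (h '' K) rstar) :
    ∃ (μ : Measure (Fin n → ℝ)) (η : Fin s → ℝ),
      IsFiniteMeasure μ ∧ μ Yᶜ = 0 ∧ (∀ j, 0 ≤ η j) ∧
      IsGLB (Set.range fun x : Fin m → ℝ =>
        h x + (∫ y, p x y ∂μ) + ∑ j, η j * ψ j x) rstar :=
  scccq_strong_duality_general m n s h hhconv ψ hψconv Y hY p hpconv hpcont K hK C1 C2 hC1 hC2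
    hSCCCQ rstar hr
end
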